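/- arXiv:1804.00407 — 5 statements merged into one kernel-verified Lean document; each statement's English description precedes it below -/
import Mathlib

section
/- Under the setting of a Borel map p : X → X* with p_*m = m* locally finite and the disintegration {μ_y} of m, if ν ∈ P(X*) is absolutely continuous with respect to m*, then the relative entropies coincide: Ent_{m*}(ν) = Ent_m(p*ν). -/
open MeasureTheory Filter Set
open scoped ENNReal NNReal

noncomputable section

namespace MMF

open scoped Classical

/-- Relative entropy `Ent_m(μ) ∈ [-∞, +∞]`: equals `∫ ρ log ρ dm` (with value `+∞`
when the positive part fails to be integrable, and `-∞` when the positive part is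
integrable but the negative part is not) if `μ = ρ m ≪ m`, and `+∞` otherwise. -/
noncomputable def Ent {X : Type*} [MeasurableSpace X] (m μ : Measure X) : EReal :=
  if μ ≪ m then
    if (∫⁻ x, ENNReal.ofReal (Real.log ((μ.rnDeriv m x).toReal)) ∂μ) = ⊤ then ⊤
    else if (∫⁻ x, ENNReal.ofReal (-Real.log ((μ.rnDeriv m x).toReal)) ∂μ) = ⊤ then ⊥
    else (((∫⁻ x, ENNReal.ofReal (Real.log ((μ.rnDeriv m x).toReal)) ∂μ).toReal
          - (∫⁻ x, ENNReal.ofReal (-Real.log ((μ.rnDeriv m x).toReal)) ∂μ).toReal : ℝ) : EReal)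
  else ⊤

end MMF

open MMF

/-- for a Borel map `p` with `p_*m = m*` locally finite and the
disintegration `{μ_y}` of `m`, if `ν ≪ m*` is a probability measure then the relative
entropies coincide: `Ent_{m*}(ν) = Ent_m(p*ν)`, where `p*ν := ν.bind μfam` is the
pullback measure. -/
theorem entropy_pullback_eq
    {X Q : Type*} [MetricSpace X] [MetricSpace Q]
    [CompleteSpace X] [CompleteSpace Q]
    [TopologicalSpace.SeparableSpace X] [TopologicalSpace.SeparableSpace Q]
    [MeasurableSpace X] [BorelSpace X] [MeasurableSpace Q] [BorelSpace Q]
    (m : Measure X) [IsLocallyFiniteMeasure m]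
    (p : X → Q) (hpm : Measurable p)
    [IsLocallyFiniteMeasure (m.map p)]
    -- the disintegration of `m` for `p`
    (μfam : Q → Measure X)
    (hprob : ∀ y, IsProbabilityMeasure (μfam y))
    (hmeas : ∀ A : Set X, MeasurableSet A → Measurable fun y => μfam y A)
    (hfiber : ∀ᵐ y ∂(m.map p), (μfam y).map p = Measure.dirac y)
    (hdis : m = (m.map p).bind μfam)
    (ν : Measure Q) [IsProbabilityMeasure ν] (hac : ν ≪ m.map p) :
    Ent (m.map p) ν = Ent m (ν.bind μfam) := by
  have hρmeas : Measurable (ν.rnDeriv (m.map p)) := Measure.measurable_rnDeriv _ _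
  set ρ := ν.rnDeriv (m.map p) with hρdef
  have hμfam : Measurable μfam := Measure.measurable_of_measurable_coe _ hmeas
  set μ := ν.bind μfam with hμdef
  have hfiberν : ∀ᵐ y ∂ν, (μfam y).map p = Measure.dirac y := hac.ae_le hfiber
  -- concentration of fibers
  have hconc : ∀ᵐ y ∂(m.map p), ∀ᵐ x ∂(μfam y), p x = y := by
    filter_upwards [hfiber] with y hy
    have h0 : μfam y (p ⁻¹' {y}ᶜ) = 0 := by
      rw [← Measure.map_apply hpm (measurableSet_singleton y).compl, hy,
        Measure.dirac_apply' _ (measurableSet_singleton y).compl]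
      simp
    rw [ae_iff]
    have hset : {x | ¬ p x = y} = p ⁻¹' {y}ᶜ := by ext x; simp
    rw [hset]; exact h0
  -- key change of variables
  have key : ∀ g : ℝ≥0∞ → ℝ≥0∞, Measurable g →
      ∫⁻ x, g (ρ (p x)) ∂μ = ∫⁻ y, g (ρ y) ∂ν := by
    intro g hg
    have hgf : Measurable fun x => g (ρ (p x)) := (hg.comp hρmeas).comp hpm
    rw [hμdef, Measure.lintegral_bind hμfam.aemeasurable hgf.aemeasurable]
    refine lintegral_congr_ae ?_
    filter_upwards [hfiberν] with y hy
    calc ∫⁻ x, g (ρ (p x)) ∂(μfam y)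
        = ∫⁻ z, g (ρ z) ∂((μfam y).map p) := (lintegral_map (hg.comp hρmeas) hpm).symm
      _ = g (ρ y) := by
          have hgρ : Measurable fun z => g (ρ z) := hg.comp hρmeas
          rw [hy]; exact lintegral_dirac' y hgρ
  have hν : (m.map p).withDensity ρ = ν := Measure.withDensity_rnDeriv_eq ν (m.map p) hac
  -- μ is m with density ρ ∘ p
  have hμeq : μ = m.withDensity (fun x => ρ (p x)) := by
    ext s hs
    rw [hμdef, Measure.bind_apply hs hμfam.aemeasurable, withDensity_apply _ hs,
      ← lintegral_indicator hs]
    conv_rhs => rw [hdis]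
    have hind : Measurable fun x => s.indicator (fun x => ρ (p x)) x :=
      Measurable.indicator (hρmeas.comp hpm) hs
    rw [Measure.lintegral_bind hμfam.aemeasurable hind.aemeasurable]
    have hLHS : ∫⁻ y, μfam y s ∂ν = ∫⁻ y, ρ y * μfam y s ∂(m.map p) := by
      rw [← hν, lintegral_withDensity_eq_lintegral_mul _ hρmeas (hmeas s hs)]
      rfl
    rw [hLHS]
    refine lintegral_congr_ae ?_
    filter_upwards [hconc] with y hy
    have hinner : ∫⁻ x, s.indicator (fun x => ρ (p x)) x ∂(μfam y)
        = ∫⁻ x, s.indicator (fun _ => ρ y) x ∂(μfam y) := by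
      refine lintegral_congr_ae ?_
      filter_upwards [hy] with x hx
      by_cases hxs : x ∈ s <;> simp [hxs, hx]
    rw [hinner, lintegral_indicator hs, setLIntegral_const]
  have hμm : μ ≪ m := hμeq ▸ withDensity_absolutelyContinuous m _
  have hrn : μ.rnDeriv m =ᵐ[m] fun x => ρ (p x) :=
    hμeq ▸ Measure.rnDeriv_withDensity m (hρmeas.comp hpm)
  have hrnμ : μ.rnDeriv m =ᵐ[μ] fun x => ρ (p x) := hμm.ae_le hrn
  have hmain : ∀ g : ℝ≥0∞ → ℝ≥0∞, Measurable g →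
      ∫⁻ x, g (μ.rnDeriv m x) ∂μ = ∫⁻ y, g (ρ y) ∂ν := by
    intro g hg
    have hae : (fun x => g (μ.rnDeriv m x)) =ᵐ[μ] fun x => g (ρ (p x)) :=
      hrnμ.mono fun x hx => by simp [hx]
    rw [lintegral_congr_ae hae]
    exact key g hg
  have hgp : Measurable fun t : ℝ≥0∞ => ENNReal.ofReal (Real.log t.toReal) :=
    ENNReal.measurable_ofReal.comp (Real.measurable_log.comp ENNReal.measurable_toReal)
  have hgm : Measurable fun t : ℝ≥0∞ => ENNReal.ofReal (-Real.log t.toReal) :=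
    ENNReal.measurable_ofReal.comp ((Real.measurable_log.comp ENNReal.measurable_toReal).neg)
  have hpos := hmain _ hgp
  have hneg := hmain _ hgm
  simp only [Ent]
  rw [if_pos hac, if_pos hμm, hpos, hneg]
end
end

section
/- Let X, Y be complete separable metric spaces, m a locally finite Borel measure on X, p : X → Y a Borel measurable map with p_*m locally finite. Then for any Borel probability measure μ on X, Ent_{p_*m}(p_*μ) ≤ Ent_m(μ). -/
open MeasureTheory Filter Set
open scoped ENNReal NNReal

noncomputable section

open MMF

/-- `ofReal a + ofReal b` as `ofReal` of a sum of positive parts. -/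
lemma MMF.oadd (a b : ℝ) :
    ENNReal.ofReal a + ENNReal.ofReal b = ENNReal.ofReal (max a 0 + max b 0) := by
  rw [ENNReal.ofReal_add (le_max_right a 0) (le_max_right b 0)]
  congr 1 <;> rcases le_total a 0 with h|h <;> rcases le_total b 0 with h'|h' <;>
    simp [max_eq_left, max_eq_right, *, ENNReal.ofReal_of_nonpos]

lemma MMF.ofReal4 {a b : ℝ} (h : -a ≤ b) :
    ENNReal.ofReal (-a) + ENNReal.ofReal (-b) ≤ ENNReal.ofReal a + ENNReal.ofReal b := by
  rw [MMF.oadd, MMF.oadd]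
  apply ENNReal.ofReal_le_ofReal
  rcases le_total a 0 with h1|h1 <;> rcases le_total b 0 with h2|h2 <;>
    simp [max_eq_left, max_eq_right, *] <;> nlinarith [le_max_left a 0, le_max_left b 0,
      le_max_right a 0, le_max_right b 0]

lemma MMF.omin1 {r : ℝ} (hr : 0 ≤ r) :
    ENNReal.ofReal (r - 1) + ENNReal.ofReal (min r 1) = ENNReal.ofReal r := by
  rw [MMF.oadd]
  congr 1
  rcases le_total r 1 with h|h <;>
    simp_all [max_eq_left, max_eq_right, min_eq_left, min_eq_right, sub_nonneg, sub_nonpos]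

lemma MMF.omin2 {r : ℝ} (hr : 0 ≤ r) :
    ENNReal.ofReal (1 - r) + ENNReal.ofReal (min r 1) = 1 := by
  rw [MMF.oadd, ← ENNReal.ofReal_one]
  congr 1
  rcases le_total r 1 with h|h <;>
    simp_all [max_eq_left, max_eq_right, min_eq_left, min_eq_right, sub_nonneg, sub_nonpos]

lemma MMF.omaster (l L : ℝ) :
    ENNReal.ofReal L + ENNReal.ofReal (-l) + ENNReal.ofReal (l - L)
      = ENNReal.ofReal l + ENNReal.ofReal (-L) + ENNReal.ofReal (-(l - L)) := by
  rw [MMF.oadd L (-l), MMF.oadd _ (l - L), MMF.oadd l (-L), MMF.oadd _ (-(l - L))]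
  congr 1
  rcases le_total l 0 with h1|h1 <;> rcases le_total L 0 with h2|h2 <;>
    rcases le_total l L with h3|h3 <;>
    simp [max_eq_left, max_eq_right, *, sub_nonneg, sub_nonpos] <;> linarith

lemma MMF.osub (a b : ℝ) :
    ENNReal.ofReal a ≤ ENNReal.ofReal (a - b) + ENNReal.ofReal b := by
  rw [MMF.oadd]
  apply ENNReal.ofReal_le_ofReal
  nlinarith [le_max_left (a-b) 0, le_max_left b 0, le_max_right (a-b) 0, le_max_right b 0]

/-- pushforward under a Borel map does not increase the relative entropy:
`Ent_{p_*m}(p_*μ) ≤ Ent_m(μ)`. -/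
theorem entropy_pushforward_le
    {X Y : Type*} [MetricSpace X] [MetricSpace Y]
    [CompleteSpace X] [CompleteSpace Y]
    [TopologicalSpace.SeparableSpace X] [TopologicalSpace.SeparableSpace Y]
    [MeasurableSpace X] [BorelSpace X] [MeasurableSpace Y] [BorelSpace Y]
    (m : Measure X) [IsLocallyFiniteMeasure m]
    (p : X → Y) (hpm : Measurable p)
    [IsLocallyFiniteMeasure (m.map p)]
    (μ : Measure X) [IsProbabilityMeasure μ] :
    Ent (m.map p) (μ.map p) ≤ Ent m μ := by
  classical
  by_cases hac : μ ≪ m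
  swap
  · unfold Ent; rw [if_neg hac]; exact le_top
  haveI hν : IsProbabilityMeasure (μ.map p) := Measure.isProbabilityMeasure_map hpm.aemeasurable
  have hac' : μ.map p ≪ m.map p := hac.map hpm
  set ρ : X → ℝ≥0∞ := μ.rnDeriv m with hρdef
  set σ : Y → ℝ≥0∞ := (μ.map p).rnDeriv (m.map p) with hσdef
  have hρm : Measurable ρ := Measure.measurable_rnDeriv _ _
  have hσm : Measurable σ := Measure.measurable_rnDeriv _ _
  -- a.e. positivity and finiteness
  have hρ_pos : ∀ᵐ x ∂μ, 0 < ρ x := Measure.rnDeriv_pos hac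
  have hρ_lt : ∀ᵐ x ∂μ, ρ x < ∞ := hac.ae_le (Measure.rnDeriv_lt_top μ m)
  have hσ_pos : ∀ᵐ y ∂(μ.map p), 0 < σ y := Measure.rnDeriv_pos hac'
  have hσ_lt : ∀ᵐ y ∂(μ.map p), σ y < ∞ := hac'.ae_le (Measure.rnDeriv_lt_top _ _)
  have hσp_pos : ∀ᵐ x ∂μ, 0 < σ (p x) :=
    (ae_map_iff hpm.aemeasurable (measurableSet_lt measurable_const hσm)).mp hσ_pos
  have hσp_lt : ∀ᵐ x ∂μ, σ (p x) < ∞ :=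
    (ae_map_iff hpm.aemeasurable (measurableSet_lt hσm measurable_const)).mp hσ_lt
  -- the likelihood ratio `t` and its integral bound
  set t : X → ℝ≥0∞ := fun x => σ (p x) / ρ x with htdef
  have htm : Measurable t := (hσm.comp hpm).div hρm
  have hμd : m.withDensity ρ = μ := Measure.withDensity_rnDeriv_eq _ _ hac
  have ht1 : ∫⁻ x, t x ∂μ ≤ 1 := by
    rw [← hμd, lintegral_withDensity_eq_lintegral_mul m hρm htm]
    calc ∫⁻ x, (ρ * t) x ∂m ≤ ∫⁻ x, σ (p x) ∂m := by
          apply lintegral_mono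
          intro x
          simpa [htdef, mul_comm] using ENNReal.mul_div_le (a := ρ x) (b := σ (p x))
      _ = ∫⁻ y, σ y ∂(m.map p) := (lintegral_map hσm hpm).symm
      _ = (μ.map p) univ := Measure.lintegral_rnDeriv hac'
      _ = 1 := by simp
  -- real log functions
  set l : X → ℝ := fun x => Real.log (ρ x).toReal with hldef
  set L : X → ℝ := fun x => Real.log (σ (p x)).toReal with hLdef
  set K : X → ℝ := fun x => l x - L x with hKdef
  set r : X → ℝ := fun x => (t x).toReal with hrdef
  have hlm : Measurable l := Real.measurable_log.comp hρm.ennreal_toReal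
  have hLm : Measurable L := Real.measurable_log.comp ((hσm.comp hpm).ennreal_toReal)
  have hKm : Measurable K := hlm.sub hLm
  have hrm : Measurable r := htm.ennreal_toReal
  -- a.e., `-K = log r` with `r > 0`
  have hKr : ∀ᵐ x ∂μ, -K x = Real.log (r x) ∧ 0 < r x := by
    filter_upwards [hρ_pos, hρ_lt, hσp_pos, hσp_lt] with x h1 h2 h3 h4
    have hρ0 : (ρ x).toReal ≠ 0 := (ENNReal.toReal_pos h1.ne' h2.ne).ne'
    have hσ0 : (σ (p x)).toReal ≠ 0 := (ENNReal.toReal_pos h3.ne' h4.ne).ne'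
    have hr : r x = (σ (p x)).toReal / (ρ x).toReal := ENNReal.toReal_div _ _
    constructor
    · rw [hr, Real.log_div hσ0 hρ0]
      simp [hKdef, hldef, hLdef]
    · rw [hr]
      exact div_pos (ENNReal.toReal_pos h3.ne' h4.ne) (ENNReal.toReal_pos h1.ne' h2.ne)
  -- abbreviations for the six lintegrals
  set A : ℝ≥0∞ := ∫⁻ x, ENNReal.ofReal (l x) ∂μ with hA_def
  set B : ℝ≥0∞ := ∫⁻ x, ENNReal.ofReal (-l x) ∂μ with hB_def
  set A' : ℝ≥0∞ := ∫⁻ x, ENNReal.ofReal (L x) ∂μ with hA'_def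
  set B' : ℝ≥0∞ := ∫⁻ x, ENNReal.ofReal (-L x) ∂μ with hB'_def
  set CK : ℝ≥0∞ := ∫⁻ x, ENNReal.ofReal (K x) ∂μ with hCK_def
  set CK' : ℝ≥0∞ := ∫⁻ x, ENNReal.ofReal (-K x) ∂μ with hCK'_def
  -- integral bound for ofReal r
  have hIr : ∫⁻ x, ENNReal.ofReal (r x) ∂μ ≤ 1 :=
    le_trans (lintegral_mono fun x => ENNReal.ofReal_toReal_le) ht1
  -- the min-truncation integral
  set c : ℝ≥0∞ := ∫⁻ x, ENNReal.ofReal (min (r x) 1) ∂μ with hc_def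
  have hc1 : (∫⁻ x, ENNReal.ofReal (r x - 1) ∂μ) + c = ∫⁻ x, ENNReal.ofReal (r x) ∂μ := by
    rw [← lintegral_add_left (f := fun x => ENNReal.ofReal (r x - 1)) ((hrm.sub measurable_const).ennreal_ofReal)]
    exact lintegral_congr fun x => MMF.omin1 ENNReal.toReal_nonneg
  have hc2 : (∫⁻ x, ENNReal.ofReal (1 - r x) ∂μ) + c = 1 := by
    rw [← lintegral_add_left (f := fun x => ENNReal.ofReal (1 - r x)) ((measurable_const.sub hrm).ennreal_ofReal)]
    calc ∫⁻ x, (ENNReal.ofReal (1 - r x) + ENNReal.ofReal (min (r x) 1)) ∂μ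
        = ∫⁻ _, (1 : ℝ≥0∞) ∂μ := lintegral_congr fun x => MMF.omin2 ENNReal.toReal_nonneg
      _ = 1 := by simp
  have hc_ne : c ≠ ⊤ := by
    intro h
    rw [h, add_top] at hc2
    exact (ENNReal.top_ne_one) hc2
  have h1r_le : (∫⁻ x, ENNReal.ofReal (1 - r x) ∂μ) ≤ 1 := le_trans le_self_add hc2.le
  have h1r_ne : (∫⁻ x, ENNReal.ofReal (1 - r x) ∂μ) ≠ ⊤ :=
    (lt_of_le_of_lt h1r_le ENNReal.one_lt_top).ne
  have hG0 : (∫⁻ x, ENNReal.ofReal (r x - 1) ∂μ) ≤ ∫⁻ x, ENNReal.ofReal (1 - r x) ∂μ := by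
    have h := hc1.le.trans (hIr.trans hc2.ge)
    exact (ENNReal.add_le_add_iff_right hc_ne).mp h
  -- Gibbs: CK' ≤ CK, and CK' ≤ 1
  have hGpt : ∀ᵐ x ∂μ, ENNReal.ofReal (-K x) + ENNReal.ofReal (1 - r x)
      ≤ ENNReal.ofReal (K x) + ENNReal.ofReal (r x - 1) := by
    filter_upwards [hKr] with x hx
    have hlog : -K x ≤ r x - 1 := by
      rw [hx.1]; linarith [Real.log_le_sub_one_of_pos hx.2]
    have := MMF.ofReal4 (a := K x) (b := r x - 1) hlog
    simpa [neg_sub] using this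
  have hGibbs : CK' ≤ CK := by
    have hsum : CK' + (∫⁻ x, ENNReal.ofReal (1 - r x) ∂μ)
        ≤ CK + (∫⁻ x, ENNReal.ofReal (r x - 1) ∂μ) := by
      rw [hCK'_def, hCK_def, ← lintegral_add_left (f := fun x => ENNReal.ofReal (-K x)) (hKm.neg.ennreal_ofReal),
        ← lintegral_add_left (hKm.ennreal_ofReal)]
      exact lintegral_mono_ae hGpt
    have : CK' + (∫⁻ x, ENNReal.ofReal (1 - r x) ∂μ)
        ≤ CK + (∫⁻ x, ENNReal.ofReal (1 - r x) ∂μ) :=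
      hsum.trans (add_le_add le_rfl hG0)
    exact (ENNReal.add_le_add_iff_right h1r_ne).mp this
  have hCK'1 : CK' ≤ 1 := by
    refine le_trans (lintegral_mono_ae ?_) hIr
    filter_upwards [hKr] with x hx
    apply ENNReal.ofReal_le_ofReal
    rw [hx.1]
    linarith [Real.log_le_sub_one_of_pos hx.2]
  have hCK'_ne : CK' ≠ ⊤ := (lt_of_le_of_lt hCK'1 ENNReal.one_lt_top).ne
  -- master identity: A' + B + CK = A + B' + CK'
  have hE : A' + B + CK = A + B' + CK' := by
    rw [hA'_def, hB_def, hCK_def, hA_def, hB'_def, hCK'_def,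
      ← lintegral_add_left (hLm.ennreal_ofReal), ← lintegral_add_left (f := fun x => ENNReal.ofReal (L x) + ENNReal.ofReal (-l x))
        ((hLm.ennreal_ofReal).add (hlm.neg.ennreal_ofReal)),
      ← lintegral_add_left (hlm.ennreal_ofReal), ← lintegral_add_left (f := fun x => ENNReal.ofReal (l x) + ENNReal.ofReal (-L x))
        ((hlm.ennreal_ofReal).add (hLm.neg.ennreal_ofReal))]
    exact lintegral_congr fun x => by
      simpa [hKdef] using MMF.omaster (l x) (L x)
  -- identify the entropy integrals over the pushforward
  have hmapA : (∫⁻ y, ENNReal.ofReal (Real.log (((μ.map p).rnDeriv (m.map p)) y).toReal)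
      ∂(μ.map p)) = A' := by
    rw [hA'_def]
    exact lintegral_map (Real.measurable_log.comp hσm.ennreal_toReal).ennreal_ofReal hpm
  have hmapB : (∫⁻ y, ENNReal.ofReal (-Real.log (((μ.map p).rnDeriv (m.map p)) y).toReal)
      ∂(μ.map p)) = B' := by
    rw [hB'_def]
    exact lintegral_map
      ((Real.measurable_log.comp hσm.ennreal_toReal).neg).ennreal_ofReal hpm
  -- unfold the entropies
  unfold Ent
  rw [if_pos hac, if_pos hac']
  rw [hmapA, hmapB]
  change (if A = ⊤ then (⊤:EReal) else if B = ⊤ then ⊥ else ((A.toReal - B.toReal : ℝ) : EReal)) ≥ _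
  by_cases hA : A = ⊤
  · rw [if_pos hA]; exact le_top
  rw [if_neg hA]
  have hA' : A' ≠ ⊤ := by
    have hle : A' ≤ A + CK' := by
      rw [hA'_def, hA_def, hCK'_def, ← lintegral_add_left (hlm.ennreal_ofReal)]
      refine lintegral_mono fun x => ?_
      have := MMF.osub (L x) (-K x)
      simpa [hKdef, sub_neg_eq_add] using this
    exact (lt_of_le_of_lt hle (ENNReal.add_lt_top.mpr
      ⟨(lt_top_iff_ne_top.mpr hA), (lt_top_iff_ne_top.mpr hCK'_ne)⟩)).ne
  rw [ge_iff_le, if_neg hA']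
  by_cases hB' : B' = ⊤
  · rw [if_pos hB']; exact bot_le
  rw [if_neg hB']
  have hCK_ne : CK ≠ ⊤ := by
    have hle : CK ≤ A + B' := by
      rw [hCK_def, hA_def, hB'_def, ← lintegral_add_left (hlm.ennreal_ofReal)]
      refine lintegral_mono fun x => ?_
      have := MMF.osub (K x) (-L x)
      simpa [hKdef, sub_neg_eq_add] using this
    exact (lt_of_le_of_lt hle (ENNReal.add_lt_top.mpr ⟨(lt_top_iff_ne_top.mpr hA), (lt_top_iff_ne_top.mpr hB')⟩)).ne
  have hMain : A' + B ≤ A + B' := by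
    have h1 : A' + B + CK ≤ A + B' + CK := by
      rw [hE]; exact add_le_add le_rfl hGibbs
    exact (ENNReal.add_le_add_iff_right hCK_ne).mp h1
  have hB : B ≠ ⊤ := by
    intro h
    rw [h, add_top] at hMain
    exact (ENNReal.add_lt_top.mpr ⟨(lt_top_iff_ne_top.mpr hA), (lt_top_iff_ne_top.mpr hB')⟩).ne (top_le_iff.mp hMain)
  rw [if_neg hB, EReal.coe_le_coe_iff]
  have hMainR : A'.toReal + B.toReal ≤ A.toReal + B'.toReal := by
    have := ENNReal.toReal_mono (ENNReal.add_ne_top.mpr ⟨hA, hB'⟩) hMain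
    rwa [ENNReal.toReal_add hA' hB, ENNReal.toReal_add hA hB'] at this
  linarith
end
end

section
/- Let X, Y be metric measure spaces and p : X → Y a 1-Lipschitz map with p_*m_X = m_Y. Suppose there is a Borel set Ω ⊂ Y of full m_Y-measure such that the disintegration {μ_y} of m_X along p satisfies W₂(μ_y, μ_{y'}) = d_Y(y, y') for all y, y' ∈ Ω. Then p is a submetry: p(B_r(x)) = B_r(p(x)) for every x ∈ X and r > 0. -/
/-!
Since `p` is 1-Lipschitz, every coupling of two good fibre measures `μ_y`, `μ_y'` moves mass by
at least `d(y, y')`; as their `W₂`-distance is exactly `d(y, y')`, a near-optimal coupling moves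
all but an arbitrarily small amount of mass by less than `d(y, y') + ε` (a Markov estimate on the excess
cost). So each point of the support of `μ_y` lies within `d(y, y') + ε` of the support of `μ_y'`.
These supports are dense in `X`, because `m_X` charges every ball, and they lie over their base
points. Lifting step by step along good base points converging geometrically to a target `y'` gives
a Cauchy sequence in `X` whose limit lies over `y'`, at distance about `d(p x, y')` from the start.
-/

open MeasureTheory Filter Set
open scoped ENNReal NNReal

noncomputable section

namespace MMF

/-- A transport plan (coupling) between two measures. -/
def IsCoupling {X Y : Type*} [MeasurableSpace X] [MeasurableSpace Y]
    (π : Measure (X × Y)) (μ : Measure X) (ν : Measure Y) : Prop :=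
  π.map Prod.fst = μ ∧ π.map Prod.snd = ν

/-- The `L^q`-Wasserstein distance, with values in `[0, ∞]`. -/
noncomputable def W {X : Type*} [MeasurableSpace X] [PseudoEMetricSpace X]
    (q : ℝ) (μ ν : Measure X) : ℝ≥0∞ :=
  ⨅ π ∈ {π : Measure (X × X) | IsCoupling π μ ν},
    (∫⁻ p, edist p.1 p.2 ^ q ∂π) ^ (1 / q)

end MMF

open MMF

namespace MeasureTheory

theorem add_mul_measure_le_lintegral {α : Type*} [MeasurableSpace α] {π : Measure α}
    [IsProbabilityMeasure π] {f : α → ℝ≥0∞} (hf : AEMeasurable f π) {a b : ℝ≥0∞}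
    (ha : ∀ᵐ x ∂π, a ≤ f x) : a + (b - a) * π {x | b ≤ f x} ≤ ∫⁻ x, f x ∂π := by
  calc a + (b - a) * π {x | b ≤ f x}
      ≤ a + (b - a) * π {x | b - a ≤ f x - a} := by
        gcongr a + _ * π ?_
        exact fun x (hx : b ≤ f x) => tsub_le_tsub_right hx a
    _ ≤ a + ∫⁻ x, f x - a ∂π := by gcongr; exact mul_meas_ge_le_lintegral₀ (hf.sub_const a) _
    _ = ∫⁻ x, f x - a + a ∂π := by
        rw [lintegral_add_right _ measurable_const, lintegral_const, measure_univ, mul_one,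
          add_comm]
    _ = ∫⁻ x, f x ∂π := lintegral_congr_ae (ha.mono fun x hx => tsub_add_cancel_of_le hx)

theorem ae_eq_of_map_eq_dirac {X Y : Type*} [MeasurableSpace X] [MeasurableSpace Y]
    [MeasurableSingletonClass Y] {p : X → Y} (hp : Measurable p) {μ : Measure X} {y : Y}
    (h : μ.map p = Measure.dirac y) : ∀ᵐ x ∂μ, p x = y :=
  ae_of_ae_map (p := fun z => z = y) hp.aemeasurable (by rw [h, ae_dirac_eq]; rfl)

theorem Measure.isOpenPosMeasure_of_measure_ball_pos {X : Type*} [PseudoMetricSpace X]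
    [MeasurableSpace X] {μ : Measure X} (h : ∀ (x : X) (r : ℝ), 0 < r → 0 < μ (Metric.ball x r)) :
    μ.IsOpenPosMeasure where
  open_pos U hU := fun ⟨x, hx⟩ => by
    obtain ⟨r, hr, hball⟩ := Metric.isOpen_iff.1 hU x hx
    exact ((h x r hr).trans_le (measure_mono hball)).ne'

theorem dense_biUnion_support_bind {X Y : Type*} [TopologicalSpace X] [HereditarilyLindelofSpace X]
    [MeasurableSpace X] [OpensMeasurableSpace X] [MeasurableSpace Y]
    {ν : Measure Y} {κ : Y → Measure X} (hκ : Measurable κ) [(ν.bind κ).IsOpenPosMeasure]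
    {G : Set Y} (hG : ∀ᵐ y ∂ν, y ∈ G) : Dense (⋃ y ∈ G, (κ y).support) := by
  refine dense_iff_inter_open.2 fun U hU hne => ?_
  obtain ⟨y, hyG, hy⟩ : ∃ y ∈ G, κ y U ≠ 0 := by
    by_contra! h
    have hzero : ∫⁻ y, κ y U ∂ν = 0 :=
      (lintegral_congr_ae (hG.mono h)).trans lintegral_zero
    exact hU.measure_ne_zero (ν.bind κ) hne
      (by rwa [Measure.bind_apply hU.measurableSet hκ.aemeasurable])
  obtain ⟨x, hxU, hx⟩ := Measure.nonempty_inter_support_of_pos (pos_iff_ne_zero.2 hy)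
  exact ⟨x, hxU, Set.mem_iUnion₂.2 ⟨y, hyG, hx⟩⟩

end MeasureTheory

section ApproximateLift

variable {X Y : Type*} [PseudoMetricSpace X] [MetricSpace Y] {p : X → Y} {A : Set X} {G : Set Y}

theorem exists_seq_of_approxLift
    (hlift : ∀ a ∈ A, ∀ y ∈ G, ∀ ε > 0, ∃ a' ∈ A, p a' = y ∧ dist a a' < dist (p a) y + ε)
    {a : X} (ha : a ∈ A) {z : ℕ → Y} (hz : ∀ n, z n ∈ G) {e : ℕ → ℝ} (he : ∀ n, 0 < e n) :
    ∃ b : ℕ → X, (∀ n, p (b n) = z n) ∧ dist a (b 0) < dist (p a) (z 0) + e 0 ∧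
      ∀ n, dist (b n) (b (n + 1)) < dist (z n) (z (n + 1)) + e (n + 1) := by
  choose! L hLA hLp hLd using hlift
  let b : ℕ → X := fun n => Nat.rec (L a (z 0) (e 0)) (fun n bn => L bn (z (n + 1)) (e (n + 1))) n
  have hb : ∀ n, b n ∈ A ∧ p (b n) = z n := by
    intro n
    induction n with
    | zero => exact ⟨hLA a ha _ (hz 0) _ (he 0), hLp a ha _ (hz 0) _ (he 0)⟩
    | succ n ih => exact ⟨hLA _ ih.1 _ (hz _) _ (he _), hLp _ ih.1 _ (hz _) _ (he _)⟩
  refine ⟨b, fun n => (hb n).2, hLd a ha _ (hz 0) _ (he 0), fun n => ?_⟩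
  simpa only [(hb n).2] using hLd _ (hb n).1 _ (hz (n + 1)) _ (he (n + 1))

theorem exists_eq_dist_lt_of_approxLift [CompleteSpace X] (hp : Continuous p) (hG : Dense G)
    (hlift : ∀ a ∈ A, ∀ y ∈ G, ∀ ε > 0, ∃ a' ∈ A, p a' = y ∧ dist a a' < dist (p a) y + ε)
    {a : X} (ha : a ∈ A) (y : Y) {ε : ℝ} (hε : 0 < ε) :
    ∃ x, p x = y ∧ dist a x < dist (p a) y + ε := by
  set e : ℕ → ℝ := fun n => ε / 8 * (1 / 2) ^ n
  have he : ∀ n, 0 < e n := fun n => by positivity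
  have he_succ : ∀ n, e n = 2 * e (n + 1) := fun n => by simp only [e, pow_succ]; ring
  choose z hzG hz using fun n => hG.exists_dist_lt y (he n)
  obtain ⟨b, hbz, hb₀, hb⟩ := exists_seq_of_approxLift hlift ha hzG he
  have hstep : ∀ n, dist (b n) (b (n + 1)) ≤ ε / 4 * (1 / 2) ^ n := by
    intro n
    have := dist_triangle_left (z n) (z (n + 1)) y
    have : ε / 4 * (1 / 2) ^ n = 2 * e n := by simp only [e]; ring
    linarith [hb n, hz n, hz (n + 1), he_succ n]
  obtain ⟨x, hx⟩ :=
    cauchySeq_tendsto_of_complete (cauchySeq_of_le_geometric _ _ (by norm_num) hstep)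
  have hzy : Tendsto z atTop (nhds y) := by
    rw [tendsto_iff_dist_tendsto_zero]
    refine squeeze_zero (fun n => dist_nonneg) (fun n => (dist_comm (z n) y ▸ hz n).le) ?_
    simpa [e] using (tendsto_pow_atTop_nhds_zero_of_lt_one (by norm_num : (0 : ℝ) ≤ 1 / 2)
      (by norm_num)).const_mul (ε / 8)
  refine ⟨x, tendsto_nhds_unique ((hp.tendsto x).comp hx) (hzy.congr fun n => (hbz n).symm), ?_⟩
  have htail := dist_le_of_le_geometric_of_tendsto₀ _ _ (by norm_num) hstep hx
  have := dist_triangle (p a) y (z 0)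
  have := dist_triangle a (b 0) x
  norm_num at htail
  linarith [hz 0, show e 0 = ε / 8 by simp [e]]

theorem image_ball_eq_ball_of_approxLift [CompleteSpace X] (hp : LipschitzWith 1 p)
    (hA : Dense A) (hG : Dense G)
    (hlift : ∀ a ∈ A, ∀ y ∈ G, ∀ ε > 0, ∃ a' ∈ A, p a' = y ∧ dist a a' < dist (p a) y + ε)
    (x : X) (r : ℝ) : p '' Metric.ball x r = Metric.ball (p x) r := by
  refine (Set.mapsTo_iff_image_subset.1 ?_).antisymm fun y hy => ?_
  · simpa using hp.mapsTo_ball one_ne_zero x r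
  obtain ⟨δ, hδ, hδr⟩ : ∃ δ > 0, dist y (p x) + 3 * δ = r :=
    ⟨(r - dist y (p x)) / 3, by linarith [Metric.mem_ball.1 hy], by ring⟩
  obtain ⟨a, ha, hxa⟩ := hA.exists_dist_lt x hδ
  obtain ⟨x', hx'y, hax'⟩ := exists_eq_dist_lt_of_approxLift hp.continuous hG hlift ha y hδ
  have hpa : dist (p a) (p x) ≤ dist x a := by simpa [dist_comm x a] using hp.dist_le_mul a x
  refine ⟨x', Metric.mem_ball.2 ?_, hx'y⟩
  calc dist x' x ≤ dist x a + dist a x' := by rw [dist_comm x' x]; exact dist_triangle _ _ _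
    _ < δ + (dist (p a) y + δ) := by gcongr
    _ ≤ δ + (dist (p a) (p x) + dist y (p x) + δ) := by
        gcongr; exact dist_triangle_right _ _ _
    _ < r := by linarith

end ApproximateLift

namespace MMF

section Coupling

variable {X Y : Type*} [MeasurableSpace X] [MeasurableSpace Y]
  {π : Measure (X × Y)} {μ : Measure X} {ν : Measure Y}

theorem IsCoupling.isProbabilityMeasure [IsProbabilityMeasure μ] (h : IsCoupling π μ ν) :
    IsProbabilityMeasure π := by
  have : IsProbabilityMeasure (π.map Prod.fst) := h.1 ▸ inferInstance
  exact Measure.isProbabilityMeasure_of_map Prod.fst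

theorem IsCoupling.measure_fst_preimage (h : IsCoupling π μ ν) {s : Set X}
    (hs : MeasurableSet s) : π (Prod.fst ⁻¹' s) = μ s := by
  rw [← Measure.map_apply measurable_fst hs, h.1]

theorem IsCoupling.ae_fst (h : IsCoupling π μ ν) {P : X → Prop} (hP : ∀ᵐ x ∂μ, P x) :
    ∀ᵐ q ∂π, P q.1 :=
  ae_of_ae_map measurable_fst.aemeasurable (h.1.symm ▸ hP)

theorem IsCoupling.ae_snd (h : IsCoupling π μ ν) {P : Y → Prop} (hP : ∀ᵐ y ∂ν, P y) :
    ∀ᵐ q ∂π, P q.2 :=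
  ae_of_ae_map measurable_snd.aemeasurable (h.2.symm ▸ hP)

end Coupling

section NearOptimal

variable {X : Type*} [PseudoEMetricSpace X] [SecondCountableTopology X] [MeasurableSpace X]
  [OpensMeasurableSpace X] {μ ν : Measure X} [IsProbabilityMeasure μ] {D : ℝ≥0∞}

theorem exists_isCoupling_measure_edist_ge_lt (hW : W 2 μ ν ≤ D) (hD : D ≠ ∞)
    (hlow : ∀ π, IsCoupling π μ ν → ∀ᵐ q ∂π, D ≤ edist q.1 q.2)
    {ε m : ℝ≥0∞} (hε₀ : ε ≠ 0) (hε : ε ≠ ∞) (hm : m ≠ 0) :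
    ∃ π, IsCoupling π μ ν ∧ π {q | D + ε ≤ edist q.1 q.2} < m := by
  have h2 : (0 : ℝ) < 2 := two_pos
  have hD2 : D ^ (2 : ℝ) ≠ ∞ := by finiteness
  set gap := (D + ε) ^ (2 : ℝ) - D ^ (2 : ℝ)
  have hgap₀ : gap ≠ 0 := (tsub_pos_of_lt <| (ENNReal.rpow_lt_rpow_iff h2).2 <|
    ENNReal.lt_add_right hD hε₀).ne'
  have hgap : gap ≠ ∞ := ENNReal.sub_ne_top (by finiteness)
  -- each pair at distance `≥ D + ε` costs `gap` more than `D²`, so this budget allows mass `< m`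
  have hWlt : W 2 μ ν < (D ^ (2 : ℝ) + gap * m) ^ (1 / (2 : ℝ)) := by
    refine hW.trans_lt ?_
    rw [one_div, ENNReal.lt_rpow_inv_iff h2]
    exact ENNReal.lt_add_right hD2 (mul_ne_zero hgap₀ hm)
  obtain ⟨π, hπ, hlt⟩ : ∃ π, IsCoupling π μ ν ∧
      (∫⁻ q, edist q.1 q.2 ^ (2 : ℝ) ∂π) ^ (1 / (2 : ℝ)) < _ := by
    simpa only [W, iInf_lt_iff, exists_prop, Set.mem_ofPred_eq] using hWlt
  have := hπ.isProbabilityMeasure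
  refine ⟨π, hπ, (ENNReal.mul_lt_mul_iff_right hgap₀ hgap).1 <|
    (ENNReal.add_lt_add_iff_left hD2).1 ?_⟩
  calc D ^ (2 : ℝ) + gap * π {q | D + ε ≤ edist q.1 q.2}
      = D ^ (2 : ℝ) + gap * π {q | (D + ε) ^ (2 : ℝ) ≤ edist q.1 q.2 ^ (2 : ℝ)} := by
        simp only [ENNReal.rpow_le_rpow_iff h2]
    _ ≤ ∫⁻ q, edist q.1 q.2 ^ (2 : ℝ) ∂π :=
        add_mul_measure_le_lintegral
          ((measurable_fst.edist measurable_snd).pow_const _).aemeasurable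
          ((hlow π hπ).mono fun q hq => ENNReal.rpow_le_rpow hq h2.le)
    _ < D ^ (2 : ℝ) + gap * m := by
        rwa [ENNReal.rpow_lt_rpow_iff (by norm_num)] at hlt

theorem exists_mem_support_edist_lt (hW : W 2 μ ν ≤ D) (hD : D ≠ ∞)
    (hlow : ∀ π, IsCoupling π μ ν → ∀ᵐ q ∂π, D ≤ edist q.1 q.2)
    {x₀ : X} (hx₀ : x₀ ∈ μ.support) {ε : ℝ≥0∞} (hε₀ : ε ≠ 0) (hε : ε ≠ ∞) :
    ∃ x ∈ ν.support, edist x₀ x < D + ε := by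
  set U := Metric.eball x₀ (ε / 2)
  have hU : 0 < μ U := (Measure.mem_support_iff_forall x₀).1 hx₀ U
    (Metric.eball_mem_nhds x₀ (ENNReal.half_pos hε₀))
  set T := {q : X × X | D + ε / 2 ≤ edist q.1 q.2}
  have hT : MeasurableSet T :=
    measurableSet_le measurable_const (measurable_fst.edist measurable_snd)
  obtain ⟨π, hπ, hπT⟩ := exists_isCoupling_measure_edist_ge_lt hW hD hlow
    (ENNReal.half_pos hε₀).ne' (ENNReal.div_ne_top hε two_ne_zero) hU.ne'
  have hpos : π (Prod.fst ⁻¹' U \ T) ≠ 0 := by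
    intro h0
    have hsplit := measure_inter_add_sdiff (μ := π) (Prod.fst ⁻¹' U) hT
    rw [h0, add_zero, hπ.measure_fst_preimage (s := U) Metric.isOpen_eball.measurableSet] at hsplit
    exact (hπT.trans_le (hsplit ▸ measure_mono Set.inter_subset_right)).false
  obtain ⟨q, ⟨hq₁, hq₂⟩, hq⟩ := ((frequently_ae_mem_iff.2 hpos).and_eventually
    (hπ.ae_snd Measure.support_mem_ae)).exists
  refine ⟨q.2, hq, ?_⟩
  calc edist x₀ q.2 ≤ edist x₀ q.1 + edist q.1 q.2 := edist_triangle _ _ _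
    _ < ε / 2 + (D + ε / 2) := ENNReal.add_lt_add ((edist_comm x₀ q.1).trans_lt hq₁) (not_le.1 hq₂)
    _ = D + ε := by rw [add_left_comm, ENNReal.add_halves]

end NearOptimal

theorem exists_mem_support_dist_lt_of_W_le {X Y : Type*} [PseudoMetricSpace X]
    [PseudoMetricSpace Y]
    [SecondCountableTopology X] [MeasurableSpace X] [OpensMeasurableSpace X]
    {p : X → Y} (hp : LipschitzWith 1 p) {μ ν : Measure X} [IsProbabilityMeasure μ] {y₁ y₂ : Y}
    (hμ : ∀ᵐ x ∂μ, p x = y₁) (hν : ∀ᵐ x ∂ν, p x = y₂) (hW : W 2 μ ν ≤ edist y₁ y₂)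
    {x₀ : X} (hx₀ : x₀ ∈ μ.support) {ε : ℝ} (hε : 0 < ε) :
    ∃ x ∈ ν.support, dist x₀ x < dist y₁ y₂ + ε := by
  have hlow (π : Measure (X × X)) (hπ : IsCoupling π μ ν) :
      ∀ᵐ q ∂π, edist y₁ y₂ ≤ edist q.1 q.2 := by
    filter_upwards [hπ.ae_fst hμ, hπ.ae_snd hν] with q h₁ h₂
    simpa [h₁, h₂] using hp.edist_le_mul q.1 q.2
  obtain ⟨x, hx, hlt⟩ := exists_mem_support_edist_lt hW (edist_ne_top y₁ y₂) hlow hx₀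
    (ENNReal.ofReal_pos.2 hε).ne' ENNReal.ofReal_ne_top
  refine ⟨x, hx, ?_⟩
  rwa [edist_dist, edist_dist, ← ENNReal.ofReal_add dist_nonneg hε.le,
    ENNReal.ofReal_lt_ofReal_iff (by positivity)] at hlt

end MMF

theorem lipschitz_disintegration_submetry_general
    {X Y : Type*} [MetricSpace X] [MetricSpace Y]
    [CompleteSpace X]
    [TopologicalSpace.SeparableSpace X]
    [MeasurableSpace X] [BorelSpace X] [MeasurableSpace Y] [BorelSpace Y]
    (mX : Measure X) (mY : Measure Y)
    (hsuppX : ∀ (x : X) (r : ℝ), 0 < r → 0 < mX (Metric.ball x r))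
    (hsuppY : ∀ (y : Y) (r : ℝ), 0 < r → 0 < mY (Metric.ball y r))
    (p : X → Y) (hp : LipschitzWith 1 p)
    -- the disintegration of `m_X` along `p`
    (μfam : Y → Measure X)
    (hprob : ∀ y, IsProbabilityMeasure (μfam y))
    (hmeas : ∀ A : Set X, MeasurableSet A → Measurable fun y => μfam y A)
    (hfiber : ∀ᵐ y ∂mY, (μfam y).map p = Measure.dirac y)
    (hdis : mX = mY.bind μfam)
    -- `Ω`: a full-measure Borel set on which `W₂(μ_y, μ_{y'}) = d_Y(y, y')`
    (Ω : Set Y) (hΩfull : mY Ωᶜ = 0)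
    (hW : ∀ y ∈ Ω, ∀ y' ∈ Ω, W 2 (μfam y) (μfam y') = edist y y') :
    ∀ (x : X) (r : ℝ), 0 < r → p '' Metric.ball x r = Metric.ball (p x) r := by
  intro x r _
  have := Measure.isOpenPosMeasure_of_measure_ball_pos hsuppY
  have : (mY.bind μfam).IsOpenPosMeasure :=
    hdis ▸ Measure.isOpenPosMeasure_of_measure_ball_pos hsuppX
  set G := Ω ∩ {y | ∀ᵐ x ∂μfam y, p x = y}
  have hG : ∀ᵐ y ∂mY, y ∈ G := by
    filter_upwards [measure_eq_zero_iff_ae_notMem.1 hΩfull, hfiber] with y hΩ hy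
    exact ⟨not_not.1 hΩ, ae_eq_of_map_eq_dirac hp.continuous.measurable hy⟩
  have hsupp (y : Y) (hy : y ∈ G) : (μfam y).support ⊆ p ⁻¹' {y} :=
    Measure.support_subset_of_isClosed (isClosed_singleton.preimage hp.continuous) hy.2
  refine image_ball_eq_ball_of_approxLift hp
    (dense_biUnion_support_bind (Measure.measurable_of_measurable_coe μfam hmeas) hG)
    (Measure.dense_of_ae hG) ?_ x r
  intro a ha y₂ hy₂ ε hε
  obtain ⟨y₁, hy₁, ha⟩ := Set.mem_iUnion₂.1 ha
  obtain ⟨x₂, hx₂, hlt⟩ := exists_mem_support_dist_lt_of_W_le hp hy₁.2 hy₂.2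
    (hW y₁ hy₁.1 y₂ hy₂.1).le ha hε
  refine ⟨x₂, Set.mem_iUnion₂.2 ⟨y₂, hy₂, hx₂⟩, hsupp y₂ hy₂ hx₂, ?_⟩
  rwa [hsupp y₁ hy₁ ha]

/-- if a 1-Lipschitz map `p : X → Y` between metric measure spaces with
`p_*m_X = m_Y` admits a disintegration `{μ_y}` satisfying `W₂(μ_y, μ_{y'}) = d_Y(y, y')`
on a Borel set `Ω` of full measure, then `p` is a submetry:
`p(B_r(x)) = B_r(p(x))` for all `x` and `r > 0`. -/
theorem lipschitz_disintegration_submetry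
    {X Y : Type*} [MetricSpace X] [MetricSpace Y]
    [CompleteSpace X] [CompleteSpace Y]
    [TopologicalSpace.SeparableSpace X] [TopologicalSpace.SeparableSpace Y]
    [MeasurableSpace X] [BorelSpace X] [MeasurableSpace Y] [BorelSpace Y]
    (mX : Measure X) (mY : Measure Y)
    [IsLocallyFiniteMeasure mX] [IsLocallyFiniteMeasure mY]
    (hsuppX : ∀ (x : X) (r : ℝ), 0 < r → 0 < mX (Metric.ball x r))
    (hsuppY : ∀ (y : Y) (r : ℝ), 0 < r → 0 < mY (Metric.ball y r))
    (p : X → Y) (hp : LipschitzWith 1 p) (hpush : mX.map p = mY)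
    -- the disintegration of `m_X` along `p`
    (μfam : Y → Measure X)
    (hprob : ∀ y, IsProbabilityMeasure (μfam y))
    (hmeas : ∀ A : Set X, MeasurableSet A → Measurable fun y => μfam y A)
    (hfiber : ∀ᵐ y ∂mY, (μfam y).map p = Measure.dirac y)
    (hdis : mX = mY.bind μfam)
    -- `Ω`: a full-measure Borel set on which `W₂(μ_y, μ_{y'}) = d_Y(y, y')`
    (Ω : Set Y) (hΩm : MeasurableSet Ω) (hΩfull : mY Ωᶜ = 0)
    (hW : ∀ y ∈ Ω, ∀ y' ∈ Ω, W 2 (μfam y) (μfam y') = edist y y') :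
    ∀ (x : X) (r : ℝ), 0 < r → p '' Metric.ball x r = Metric.ball (p x) r :=
  lipschitz_disintegration_submetry_general mX mY hsuppX hsuppY p hp μfam hprob hmeas hfiber hdis Ω
    hΩfull hW
end
end

section
/- Let X be a metric measure space with a metric measure foliation with quotient map p : X → X*, and let {μ_y}_{y∈X*} be the canonical disintegration (satisfying p_*μ_y = δ_y for all y and W₂(μ_y, μ_{y'}) = d*(y,y')). Then for every q ∈ [1, ∞) and all y, y' ∈ X*, W_q(μ_y, μ_{y'}) = d*(y, y'). -/
open MeasureTheory Filter Set
open scoped ENNReal NNReal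

noncomputable section

open MMF

section AuxLemmas

variable {α : Type*} [MetricSpace α] [CompleteSpace α]
    [TopologicalSpace.SeparableSpace α] [MeasurableSpace α] [BorelSpace α]

/-- Ulam tightness, step 1: compact sets of almost full measure. -/
private lemma aux_exists_compact_univ (μ : Measure α) [IsProbabilityMeasure μ]
    {ε : ℝ≥0∞} (hε : ε ≠ 0) :
    ∃ K : Set α, IsCompact K ∧ μ Kᶜ ≤ ε := by
  rcases isEmpty_or_nonempty α with h | h
  · exfalso
    have h1 : μ univ = 1 := measure_univ
    rw [Set.univ_eq_empty_iff.mpr h, measure_empty] at h1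
    exact zero_ne_one h1
  obtain ⟨u, hu⟩ := TopologicalSpace.exists_dense_seq α
  obtain ⟨δ, hδpos, hδsum⟩ := ENNReal.exists_pos_sum_of_countable hε ℕ
  have hball : ∀ k : ℕ, ∃ N : ℕ,
      1 - (δ k : ℝ≥0∞) < μ (⋃ i ∈ Finset.range N, Metric.closedBall (u i) (1/(k+1))) := by
    intro k
    have hmono : Monotone (fun N => ⋃ i ∈ Finset.range N, Metric.closedBall (u i) (1/(k+1))) := by
      intro a b hab
      exact Set.biUnion_subset_biUnion_left (Finset.coe_subset.mpr (Finset.range_subset_range.mpr hab))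
    have hU : ⋃ N, ⋃ i ∈ Finset.range N, Metric.closedBall (u i) (1/(k+1)) = univ := by
      apply Set.eq_univ_of_forall
      intro x
      have hx : x ∈ closure (Set.range u) := hu x
      rw [Metric.mem_closure_iff] at hx
      obtain ⟨y, ⟨i, rfl⟩, hy⟩ := hx ((1:ℝ)/(k+1)) (by positivity)
      exact Set.mem_iUnion.mpr ⟨i+1, Set.mem_biUnion (Finset.self_mem_range_succ i)
        (Metric.mem_closedBall.mpr hy.le)⟩
    have htend := tendsto_measure_iUnion_atTop (μ := μ) hmono
    rw [hU, measure_univ] at htend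
    have hlt : (1:ℝ≥0∞) - δ k < 1 :=
      ENNReal.sub_lt_self ENNReal.one_ne_top one_ne_zero
        (by exact_mod_cast (hδpos k).ne')
    exact (htend.eventually (eventually_gt_nhds hlt)).exists
  choose N hN using hball
  have hFclosed : ∀ k : ℕ, IsClosed (⋃ i ∈ Finset.range (N k), Metric.closedBall (u i) (1/(k+1))) :=
    fun k => (Finset.range (N k)).finite_toSet.isClosed_biUnion
      (fun i _ => Metric.isClosed_closedBall)
  refine ⟨⋂ k, ⋃ i ∈ Finset.range (N k), Metric.closedBall (u i) (1/(k+1)), ?_, ?_⟩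
  · refine TotallyBounded.isCompact_of_isClosed ?_ (isClosed_iInter hFclosed)
    rw [Metric.totallyBounded_iff]
    intro e he
    obtain ⟨k, hk⟩ := exists_nat_one_div_lt he
    refine ⟨u '' (Finset.range (N k)), (Finset.range (N k)).finite_toSet.image u, ?_⟩
    intro x hx
    have hx' : x ∈ ⋃ i ∈ Finset.range (N k), Metric.closedBall (u i) (1/(k+1)) :=
      Set.mem_iInter.mp hx k
    obtain ⟨i, hi, hxi⟩ := Set.mem_iUnion₂.mp hx'
    refine Set.mem_biUnion (Set.mem_image_of_mem u hi) ?_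
    have hd : dist x (u i) ≤ (1:ℝ)/(k+1) := Metric.mem_closedBall.mp hxi
    exact Metric.mem_ball.mpr (lt_of_le_of_lt hd hk)
  · rw [Set.compl_iInter]
    refine le_trans (measure_iUnion_le _) (le_trans (ENNReal.tsum_le_tsum fun k => ?_) hδsum.le)
    have h1 : μ (⋃ i ∈ Finset.range (N k), Metric.closedBall (u i) (1/(k+1)))ᶜ
        = 1 - μ (⋃ i ∈ Finset.range (N k), Metric.closedBall (u i) (1/(k+1))) :=
      prob_compl_eq_one_sub (hFclosed k).measurableSet
    rw [h1, tsub_le_iff_right]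
    by_cases hc : (1:ℝ≥0∞) ≤ δ k
    · exact hc.trans (le_add_right le_rfl)
    · push_neg at hc
      have h2 := hN k
      have h3 : (1:ℝ≥0∞) < μ (⋃ i ∈ Finset.range (N k), Metric.closedBall (u i) (1/(k+1))) + δ k := by
        rwa [ENNReal.sub_lt_iff_lt_right ENNReal.coe_ne_top hc.le] at h2
      exact h3.le.trans_eq (add_comm _ _)

/-- Ulam tightness: inner regularity by compacts for probability measures. -/
private lemma aux_tight (μ : Measure α) [IsProbabilityMeasure μ] {S : Set α}
    (hS : MeasurableSet S) {ε : ℝ≥0∞} (hε : ε ≠ 0) :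
    ∃ K, K ⊆ S ∧ IsCompact K ∧ μ (S \ K) ≤ ε := by
  have hε2 : ε/2 ≠ 0 := by
    rw [Ne, ENNReal.div_eq_zero_iff]
    push_neg
    exact ⟨hε, ENNReal.ofNat_ne_top⟩
  obtain ⟨C, hCS, hCclosed, hCμ⟩ := hS.exists_isClosed_lt_add (measure_ne_top μ S) hε2
  obtain ⟨K₀, hK₀comp, hK₀μ⟩ := aux_exists_compact_univ μ hε2
  refine ⟨C ∩ K₀, Set.inter_subset_left.trans hCS, hK₀comp.inter_left hCclosed, ?_⟩
  have hsub : S \ (C ∩ K₀) ⊆ (S \ C) ∪ K₀ᶜ := by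
    rintro x ⟨hxS, hx⟩
    by_cases hxC : x ∈ C
    · exact Or.inr (fun hxK => hx ⟨hxC, hxK⟩)
    · exact Or.inl ⟨hxS, hxC⟩
  refine le_trans (measure_mono hsub) (le_trans (measure_union_le _ _) ?_)
  have h1 : μ (S \ C) ≤ ε/2 :=
    (measure_diff_lt_of_lt_add hCclosed.measurableSet.nullMeasurableSet hCS
      (measure_ne_top μ C) hCμ).le
  calc μ (S \ C) + μ K₀ᶜ ≤ ε/2 + ε/2 := add_le_add h1 hK₀μ
    _ = ε := ENNReal.add_halves ε

/-- Every `ℝ≥0∞`-valued sequence has a limit along an ultrafilter. -/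
private lemma aux_ulim (𝒰 : Ultrafilter ℕ) (f : ℕ → ℝ≥0∞) :
    ∃ a, Tendsto f (𝒰 : Filter ℕ) (nhds a) := by
  obtain ⟨a, -, ha⟩ := isCompact_univ.ultrafilter_le_nhds (𝒰.map f)
    (by simp [le_principal_iff])
  rw [Ultrafilter.coe_map] at ha
  exact ⟨a, ha⟩


/-- Construction of a limit coupling along an ultrafilter. -/
private lemma aux_limit_coupling (μ ν : Measure α) [IsProbabilityMeasure μ]
    [IsProbabilityMeasure ν] (π : ℕ → Measure (α × α))
    (h1 : ∀ n, (π n).map Prod.fst = μ) (h2 : ∀ n, (π n).map Prod.snd = ν)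
    (𝒰 : Ultrafilter ℕ) :
    ∃ P : Measure (α × α), P.map Prod.fst = μ ∧ P.map Prod.snd = ν ∧
      ∀ S T : Set α, MeasurableSet S → MeasurableSet T →
        Tendsto (fun n => π n (S ×ˢ T)) (𝒰 : Filter ℕ) (nhds (P (S ×ˢ T))) := by
  classical
  have hlim : ∀ A : Set (α × α), ∃ a, Tendsto (fun n => π n A) (𝒰 : Filter ℕ) (nhds a) :=
    fun A => aux_ulim 𝒰 _
  choose c hc using hlim
  have hcne : ∀ {A : Set (α × α)} {a : ℝ≥0∞},
      Tendsto (fun n => π n A) (𝒰 : Filter ℕ) (nhds a) → c A = a :=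
    fun h => tendsto_nhds_unique (hc _) h
  have hfst : ∀ (n) (S : Set α), MeasurableSet S → π n (S ×ˢ univ) = μ S := by
    intro n S hS
    rw [Set.prod_univ, ← Measure.map_apply measurable_fst hS, h1 n]
  have hsnd : ∀ (n) (T : Set α), MeasurableSet T → π n (univ ×ˢ T) = ν T := by
    intro n T hT
    rw [Set.univ_prod, ← Measure.map_apply measurable_snd hT, h2 n]
  have hid : ∀ (n : ℕ) (S T S' T' : Set α), MeasurableSet (S \ S') → MeasurableSet (T \ T') →
      π n (S ×ˢ T \ S' ×ˢ T') ≤ μ (S \ S') + ν (T \ T') := by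
    intro n S T S' T' hS hT
    have hsub : S ×ˢ T \ S' ×ˢ T' ⊆ ((S \ S') ×ˢ univ) ∪ (univ ×ˢ (T \ T')) := by
      rintro ⟨a, b⟩ ⟨hab, hnot⟩
      rw [Set.mem_prod] at hab
      by_cases ha' : a ∈ S'
      · refine Or.inr (Set.mem_prod.mpr ⟨trivial, hab.2, fun hb' => hnot ?_⟩)
        exact Set.mem_prod.mpr ⟨ha', hb'⟩
      · exact Or.inl (Set.mem_prod.mpr ⟨⟨hab.1, ha'⟩, trivial⟩)
    calc π n (S ×ˢ T \ S' ×ˢ T')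
        ≤ π n ((S \ S') ×ˢ univ) + π n (univ ×ˢ (T \ T')) :=
          (measure_mono hsub).trans (measure_union_le _ _)
      _ = μ (S \ S') + ν (T \ T') := by rw [hfst n _ hS, hsnd n _ hT]
  set R : Set (α × α) → Prop := fun A => ∃ S T : Set α,
    MeasurableSet S ∧ MeasurableSet T ∧ A = S ×ˢ T with hR
  set m₀ : Set (α × α) → ℝ≥0∞ := fun A => if R A then c A else ⊤ with hm₀
  have hm₀_of : ∀ {A : Set (α × α)}, R A → m₀ A = c A := fun hA => if_pos hA
  have hm₀empty : m₀ ∅ = 0 := by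
    have hRe : R ∅ := ⟨∅, ∅, MeasurableSet.empty, MeasurableSet.empty, by simp⟩
    rw [hm₀_of hRe]
    refine hcne ?_
    simp only [measure_empty]
    exact tendsto_const_nhds
  have hcadd : ∀ {A B : Set (α × α)}, MeasurableSet B → Disjoint A B →
      c (A ∪ B) = c A + c B := by
    intro A B hB hAB
    refine hcne ?_
    have he : ∀ n, π n (A ∪ B) = π n A + π n B := fun n => measure_union hAB hB
    simp only [he]
    exact (hc A).add (hc B)
  -- countable subadditivity on rectangles (via tightness and compactness)
  have hkey : ∀ (S T : Set α), MeasurableSet S → MeasurableSet T →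
      ∀ f : ℕ → Set (α × α), S ×ˢ T ⊆ (⋃ i, f i) → c (S ×ˢ T) ≤ ∑' i, m₀ (f i) := by
    intro S T hS hT f hcov
    by_cases hrect : ∀ i, R (f i)
    swap
    · push_neg at hrect
      obtain ⟨i, hi⟩ := hrect
      calc c (S ×ˢ T) ≤ ⊤ := le_top
        _ = m₀ (f i) := (if_neg hi).symm
        _ ≤ ∑' i, m₀ (f i) := ENNReal.le_tsum i
    choose Sf Tf hSf hTf hfeq using hrect
    refine ENNReal.le_of_forall_pos_le_add fun ε hε _ => ?_
    have hε4 : (ε : ℝ≥0∞)/4 ≠ 0 := by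
      rw [Ne, ENNReal.div_eq_zero_iff]
      push_neg
      exact ⟨by exact_mod_cast hε.ne', ENNReal.ofNat_ne_top⟩
    obtain ⟨K, hKS, hKcomp, hKμ⟩ := aux_tight μ hS hε4
    obtain ⟨K', hK'T, hK'comp, hK'ν⟩ := aux_tight ν hT hε4
    obtain ⟨δ, hδpos, hδsum⟩ := ENNReal.exists_pos_sum_of_countable hε4 ℕ
    obtain ⟨δ', hδ'pos, hδ'sum⟩ := ENNReal.exists_pos_sum_of_countable hε4 ℕ
    have hU : ∀ i, ∃ U, Sf i ⊆ U ∧ IsOpen U ∧ μ (U \ Sf i) ≤ δ i := by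
      intro i
      obtain ⟨U, hUsub, hUopen, hUlt⟩ := Set.exists_isOpen_lt_add (Sf i) (measure_ne_top μ _)
        (by exact_mod_cast (hδpos i).ne' : (δ i : ℝ≥0∞) ≠ 0)
      exact ⟨U, hUsub, hUopen, (measure_diff_lt_of_lt_add (hSf i).nullMeasurableSet hUsub
        (measure_ne_top μ _) hUlt).le⟩
    choose U hUsub hUopen hUd using hU
    have hV : ∀ i, ∃ V, Tf i ⊆ V ∧ IsOpen V ∧ ν (V \ Tf i) ≤ δ' i := by
      intro i
      obtain ⟨V, hVsub, hVopen, hVlt⟩ := Set.exists_isOpen_lt_add (Tf i) (measure_ne_top ν _)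
        (by exact_mod_cast (hδ'pos i).ne' : (δ' i : ℝ≥0∞) ≠ 0)
      exact ⟨V, hVsub, hVopen, (measure_diff_lt_of_lt_add (hTf i).nullMeasurableSet hVsub
        (measure_ne_top ν _) hVlt).le⟩
    choose V hVsub hVopen hVd using hV
    have hKcov : K ×ˢ K' ⊆ ⋃ i, U i ×ˢ V i := by
      refine (Set.prod_mono hKS hK'T).trans (hcov.trans (Set.iUnion_mono fun i => ?_))
      rw [hfeq i]
      exact Set.prod_mono (hUsub i) (hVsub i)
    obtain ⟨t, ht⟩ := (hKcomp.prod hK'comp).elim_finite_subcover (fun i => U i ×ˢ V i)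
      (fun i => (hUopen i).prod (hVopen i)) hKcov
    set E : ℝ≥0∞ := ((∑' i, (δ i : ℝ≥0∞)) + (∑' i, (δ' i : ℝ≥0∞))) + ((ε:ℝ≥0∞)/4 + (ε:ℝ≥0∞)/4)
      with hE
    have hbound : ∀ n, π n (S ×ˢ T) ≤ (∑ i ∈ t, π n (f i)) + E := by
      intro n
      have e1 : π n (S ×ˢ T) ≤ π n (K ×ˢ K') + ((ε:ℝ≥0∞)/4 + (ε:ℝ≥0∞)/4) := by
        refine (measure_le_inter_add_diff (π n) _ (K ×ˢ K')).trans ?_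
        refine add_le_add (measure_mono Set.inter_subset_right) ?_
        refine (hid n S T K K' (hS.diff hKcomp.measurableSet)
          (hT.diff hK'comp.measurableSet)).trans ?_
        exact add_le_add hKμ hK'ν
      have e2 : π n (K ×ˢ K') ≤ ∑ i ∈ t, π n (U i ×ˢ V i) :=
        (measure_mono ht).trans (measure_biUnion_finset_le t _)
      have e3 : ∀ i, π n (U i ×ˢ V i) ≤ π n (f i) + ((δ i : ℝ≥0∞) + (δ' i : ℝ≥0∞)) := by
        intro i
        refine (measure_le_inter_add_diff (π n) _ (f i)).trans ?_
        refine add_le_add (measure_mono Set.inter_subset_right) ?_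
        conv_lhs => rw [hfeq i]
        exact (hid n (U i) (V i) (Sf i) (Tf i) ((hUopen i).measurableSet.diff (hSf i))
          ((hVopen i).measurableSet.diff (hTf i))).trans (add_le_add (hUd i) (hVd i))
      calc π n (S ×ˢ T) ≤ π n (K ×ˢ K') + ((ε:ℝ≥0∞)/4 + (ε:ℝ≥0∞)/4) := e1
        _ ≤ (∑ i ∈ t, π n (U i ×ˢ V i)) + ((ε:ℝ≥0∞)/4 + (ε:ℝ≥0∞)/4) := add_le_add_left e2 _
        _ ≤ (∑ i ∈ t, (π n (f i) + ((δ i : ℝ≥0∞) + (δ' i : ℝ≥0∞))))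
              + ((ε:ℝ≥0∞)/4 + (ε:ℝ≥0∞)/4) :=
            add_le_add_left (Finset.sum_le_sum fun i _ => e3 i) _
        _ = ((∑ i ∈ t, π n (f i)) + (∑ i ∈ t, ((δ i : ℝ≥0∞) + (δ' i : ℝ≥0∞))))
              + ((ε:ℝ≥0∞)/4 + (ε:ℝ≥0∞)/4) := by rw [Finset.sum_add_distrib]
        _ ≤ ((∑ i ∈ t, π n (f i)) + ((∑' i, (δ i : ℝ≥0∞)) + (∑' i, (δ' i : ℝ≥0∞))))
              + ((ε:ℝ≥0∞)/4 + (ε:ℝ≥0∞)/4) := by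
            refine add_le_add_left (add_le_add_right ?_ _) _
            rw [Finset.sum_add_distrib]
            exact add_le_add (ENNReal.sum_le_tsum t) (ENNReal.sum_le_tsum t)
        _ = (∑ i ∈ t, π n (f i)) + E := by rw [hE, add_assoc]
    have hEle : E ≤ (ε : ℝ≥0∞) := by
      have h4 : ((ε:ℝ≥0∞)/4 + (ε:ℝ≥0∞)/4) + ((ε:ℝ≥0∞)/4 + (ε:ℝ≥0∞)/4) = (ε:ℝ≥0∞) := by
        rw [show ((ε:ℝ≥0∞)/4 + (ε:ℝ≥0∞)/4) + ((ε:ℝ≥0∞)/4 + (ε:ℝ≥0∞)/4)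
            = 4 * ((ε:ℝ≥0∞)/4) by ring]
        exact ENNReal.mul_div_cancel' (by norm_num) (by norm_num)
      calc E ≤ ((ε:ℝ≥0∞)/4 + (ε:ℝ≥0∞)/4) + ((ε:ℝ≥0∞)/4 + (ε:ℝ≥0∞)/4) := by
            rw [hE]
            exact add_le_add_left (add_le_add hδsum.le hδ'sum.le) _
        _ = (ε : ℝ≥0∞) := h4
    have hc_le : c (S ×ˢ T) ≤ (∑ i ∈ t, c (f i)) + E :=
      le_of_tendsto_of_tendsto' (hc (S ×ˢ T))
        ((tendsto_finset_sum t fun i _ => hc (f i)).add tendsto_const_nhds) hbound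
    have hsum_le : (∑ i ∈ t, c (f i)) ≤ ∑' i, m₀ (f i) := by
      have he : ∀ i ∈ t, c (f i) = m₀ (f i) :=
        fun i _ => (hm₀_of ⟨Sf i, Tf i, hSf i, hTf i, hfeq i⟩).symm
      rw [Finset.sum_congr rfl he]
      exact ENNReal.sum_le_tsum t
    exact hc_le.trans (add_le_add hsum_le hEle)
  -- outer measure generated by `m₀`
  set om := MeasureTheory.OuterMeasure.ofFunction m₀ hm₀empty with hom
  have hom_le : ∀ A : Set (α × α), om A ≤ m₀ A :=
    fun A => MeasureTheory.OuterMeasure.ofFunction_le A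
  have hom_rect : ∀ {S T : Set α}, MeasurableSet S → MeasurableSet T →
      om (S ×ˢ T) = c (S ×ˢ T) := by
    intro S T hS hT
    refine le_antisymm ((hom_le _).trans_eq (hm₀_of ⟨S, T, hS, hT, rfl⟩)) ?_
    rw [hom, MeasureTheory.OuterMeasure.ofFunction_apply]
    exact le_iInf fun g => le_iInf fun hg => hkey S T hS hT g hg
  -- rectangles are Caratheodory measurable
  have hcar : ∀ {S T : Set α}, MeasurableSet S → MeasurableSet T →
      MeasurableSet[om.caratheodory] (S ×ˢ T) := by
    intro S T hS hT
    rw [MeasureTheory.OuterMeasure.isCaratheodory_iff_le]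
    intro A
    have homA : om A = ⨅ (g : ℕ → Set (α × α)) (_ : A ⊆ ⋃ i, g i), ∑' i, m₀ (g i) := by
      rw [hom]; exact MeasureTheory.OuterMeasure.ofFunction_apply _ _ _
    rw [homA]
    refine le_iInf fun g => le_iInf fun hg => ?_
    by_cases hrect : ∀ i, R (g i)
    swap
    · push_neg at hrect
      obtain ⟨i, hi⟩ := hrect
      calc om (A ∩ S ×ˢ T) + om (A \ S ×ˢ T) ≤ ⊤ := le_top
        _ = m₀ (g i) := (if_neg hi).symm
        _ ≤ ∑' i, m₀ (g i) := ENNReal.le_tsum i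
    choose Sg Tg hSg hTg hgeq using hrect
    have hsplit : ∀ i, m₀ (g i)
        = c ((Sg i ∩ S) ×ˢ (Tg i ∩ T))
          + (c ((Sg i ∩ S) ×ˢ (Tg i \ T)) + c ((Sg i \ S) ×ˢ Tg i)) := by
      intro i
      have hd1 : Disjoint ((Sg i ∩ S) ×ˢ Tg i) ((Sg i \ S) ×ˢ Tg i) :=
        Disjoint.set_prod_left (Set.disjoint_sdiff_right.mono_left Set.inter_subset_right) _ _
      have hd2 : Disjoint ((Sg i ∩ S) ×ˢ (Tg i ∩ T)) ((Sg i ∩ S) ×ˢ (Tg i \ T)) :=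
        Disjoint.set_prod_right (Set.disjoint_sdiff_right.mono_left Set.inter_subset_right) _ _
      have e1 : c (Sg i ×ˢ Tg i)
          = c ((Sg i ∩ S) ×ˢ Tg i) + c ((Sg i \ S) ×ˢ Tg i) := by
        conv_lhs => rw [show Sg i ×ˢ Tg i
          = ((Sg i ∩ S) ×ˢ Tg i) ∪ ((Sg i \ S) ×ˢ Tg i) by
            rw [← Set.union_prod, Set.inter_union_diff]]
        exact hcadd (((hSg i).diff hS).prod (hTg i)) hd1
      have e2 : c ((Sg i ∩ S) ×ˢ Tg i)
          = c ((Sg i ∩ S) ×ˢ (Tg i ∩ T)) + c ((Sg i ∩ S) ×ˢ (Tg i \ T)) := by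
        conv_lhs => rw [show (Sg i ∩ S) ×ˢ Tg i
          = ((Sg i ∩ S) ×ˢ (Tg i ∩ T)) ∪ ((Sg i ∩ S) ×ˢ (Tg i \ T)) by
            rw [← Set.prod_union, Set.inter_union_diff]]
        exact hcadd (((hSg i).inter hS).prod ((hTg i).diff hT)) hd2
      rw [show m₀ (g i) = c (Sg i ×ˢ Tg i) by
        rw [← hgeq i]; exact hm₀_of ⟨Sg i, Tg i, hSg i, hTg i, hgeq i⟩]
      rw [e1, e2, add_assoc]
    have hAin : om (A ∩ S ×ˢ T) ≤ ∑' i, c ((Sg i ∩ S) ×ˢ (Tg i ∩ T)) := by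
      have hcov1 : A ∩ S ×ˢ T ⊆ ⋃ i, (Sg i ∩ S) ×ˢ (Tg i ∩ T) := by
        intro z hz
        obtain ⟨i, hi⟩ := Set.mem_iUnion.mp (hg hz.1)
        rw [hgeq i] at hi
        refine Set.mem_iUnion.mpr ⟨i, ?_⟩
        rw [← Set.prod_inter_prod]
        exact ⟨hi, hz.2⟩
      calc om (A ∩ S ×ˢ T) ≤ om (⋃ i, (Sg i ∩ S) ×ˢ (Tg i ∩ T)) := measure_mono hcov1
        _ ≤ ∑' i, om ((Sg i ∩ S) ×ˢ (Tg i ∩ T)) := measure_iUnion_le _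
        _ ≤ ∑' i, c ((Sg i ∩ S) ×ˢ (Tg i ∩ T)) := ENNReal.tsum_le_tsum fun i =>
            (hom_le _).trans_eq (hm₀_of ⟨_, _, (hSg i).inter hS, (hTg i).inter hT, rfl⟩)
    have hAout : om (A \ S ×ˢ T)
        ≤ ∑' i, (c ((Sg i ∩ S) ×ˢ (Tg i \ T)) + c ((Sg i \ S) ×ˢ Tg i)) := by
      have hcov2 : A \ S ×ˢ T
          ⊆ ⋃ i, ((Sg i ∩ S) ×ˢ (Tg i \ T) ∪ (Sg i \ S) ×ˢ Tg i) := by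
        intro z hz
        obtain ⟨i, hi⟩ := Set.mem_iUnion.mp (hg hz.1)
        rw [hgeq i] at hi
        refine Set.mem_iUnion.mpr ⟨i, ?_⟩
        by_cases hz1 : z.1 ∈ S
        · refine Or.inl (Set.mem_prod.mpr ⟨⟨hi.1, hz1⟩, hi.2, fun hz2 => hz.2 ?_⟩)
          exact Set.mem_prod.mpr ⟨hz1, hz2⟩
        · exact Or.inr (Set.mem_prod.mpr ⟨⟨hi.1, hz1⟩, hi.2⟩)
      calc om (A \ S ×ˢ T)
          ≤ om (⋃ i, ((Sg i ∩ S) ×ˢ (Tg i \ T) ∪ (Sg i \ S) ×ˢ Tg i)) := measure_mono hcov2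
        _ ≤ ∑' i, om ((Sg i ∩ S) ×ˢ (Tg i \ T) ∪ (Sg i \ S) ×ˢ Tg i) := measure_iUnion_le _
        _ ≤ ∑' i, (c ((Sg i ∩ S) ×ˢ (Tg i \ T)) + c ((Sg i \ S) ×ˢ Tg i)) := by
            refine ENNReal.tsum_le_tsum fun i => (measure_union_le _ _).trans ?_
            refine add_le_add
              ((hom_le _).trans_eq (hm₀_of ⟨_, _, (hSg i).inter hS, (hTg i).diff hT, rfl⟩))
              ((hom_le _).trans_eq (hm₀_of ⟨_, _, (hSg i).diff hS, hTg i, rfl⟩))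
    calc om (A ∩ S ×ˢ T) + om (A \ S ×ˢ T)
        ≤ (∑' i, c ((Sg i ∩ S) ×ˢ (Tg i ∩ T)))
          + ∑' i, (c ((Sg i ∩ S) ×ˢ (Tg i \ T)) + c ((Sg i \ S) ×ˢ Tg i)) :=
          add_le_add hAin hAout
      _ = ∑' i, (c ((Sg i ∩ S) ×ˢ (Tg i ∩ T))
          + (c ((Sg i ∩ S) ×ˢ (Tg i \ T)) + c ((Sg i \ S) ×ˢ Tg i))) := ENNReal.tsum_add.symm
      _ = ∑' i, m₀ (g i) := by
          exact tsum_congr fun i => (hsplit i).symm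
  -- the measurable space is below the Caratheodory σ-algebra
  have hle : (Prod.instMeasurableSpace : MeasurableSpace (α × α)) ≤ om.caratheodory := by
    rw [← generateFrom_prod]
    refine MeasurableSpace.generateFrom_le ?_
    rintro u ⟨S, hS, T, hT, rfl⟩
    exact hcar hS hT
  refine ⟨om.toMeasure hle, ?_, ?_, ?_⟩
  · refine Measure.ext fun S hS => ?_
    rw [Measure.map_apply measurable_fst hS, ← Set.prod_univ,
      MeasureTheory.toMeasure_apply om hle (hS.prod MeasurableSet.univ),
      hom_rect hS MeasurableSet.univ]
    refine hcne ?_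
    have he : (fun n => π n (S ×ˢ univ)) = fun _ => μ S := funext fun n => hfst n S hS
    rw [he]
    exact tendsto_const_nhds
  · refine Measure.ext fun T hT => ?_
    rw [Measure.map_apply measurable_snd hT, ← Set.univ_prod,
      MeasureTheory.toMeasure_apply om hle (MeasurableSet.univ.prod hT),
      hom_rect MeasurableSet.univ hT]
    refine hcne ?_
    have he : (fun n => π n (univ ×ˢ T)) = fun _ => ν T := funext fun n => hsnd n T hT
    rw [he]
    exact tendsto_const_nhds
  · intro S T hS hT
    rw [MeasureTheory.toMeasure_apply om hle (hS.prod hT), hom_rect hS hT]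
    exact hc _
end AuxLemmas


/-- for a metric measure foliation with canonical disintegration `{μ_y}`
(satisfying `p_*μ_y = δ_y` for all `y` and `W₂(μ_y, μ_{y'}) = d*(y, y')`), one has
`W_q(μ_y, μ_{y'}) = d*(y, y')` for every `q ∈ [1, ∞)` and all `y, y'`. -/
theorem canonical_disintegration_Wq_eq
    {X Q : Type*} [MetricSpace X] [MetricSpace Q]
    [CompleteSpace X] [CompleteSpace Q]
    [TopologicalSpace.SeparableSpace X] [TopologicalSpace.SeparableSpace Q]
    [MeasurableSpace X] [BorelSpace X] [MeasurableSpace Q] [BorelSpace Q]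
    (m : Measure X) [IsLocallyFiniteMeasure m]
    (hsupp : ∀ (x : X) (r : ℝ), 0 < r → 0 < m (Metric.ball x r))
    -- `p` is the quotient map of the metric measure foliation: a submetry
    (p : X → Q) (hpm : Measurable p)
    (hsub : ∀ (x : X) (r : ℝ), 0 < r → p '' Metric.ball x r = Metric.ball (p x) r)
    [IsLocallyFiniteMeasure (m.map p)]
    -- the canonical disintegration of `m` for `p`
    (μfam : Q → Measure X)
    (hprob : ∀ y, IsProbabilityMeasure (μfam y))
    (hmeas : ∀ A : Set X, MeasurableSet A → Measurable fun y => μfam y A)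
    (hfiber : ∀ y, (μfam y).map p = Measure.dirac y)
    (hdis : m = (m.map p).bind μfam)
    (hW2 : ∀ y y', W 2 (μfam y) (μfam y') = edist y y') :
    ∀ q : ℝ, 1 ≤ q → ∀ y y', W q (μfam y) (μfam y') = edist y y' := by
  intro q hq y y'
  haveI := hprob y
  haveI := hprob y'
  have hq0 : (0:ℝ) < q := lt_of_lt_of_le one_pos hq
  have hqne : q ≠ 0 := hq0.ne'
  set D : ℝ≥0∞ := edist y y' with hDdef
  have hD : D ≠ ⊤ := edist_ne_top y y'
  -- `p` is 1-Lipschitz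
  have hlip : ∀ a b : X, edist (p a) (p b) ≤ edist a b := by
    intro a b
    rw [edist_dist, edist_dist]
    refine ENNReal.ofReal_le_ofReal ?_
    by_contra hcon
    push_neg at hcon
    have hr : (0:ℝ) < dist (p a) (p b) := lt_of_le_of_lt dist_nonneg hcon
    have hb : b ∈ Metric.ball a (dist (p a) (p b)) := by
      rw [Metric.mem_ball, dist_comm]
      exact hcon
    have hpb : p b ∈ Metric.ball (p a) (dist (p a) (p b)) := by
      rw [← hsub a _ hr]
      exact ⟨b, hb, rfl⟩
    rw [Metric.mem_ball, dist_comm] at hpb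
    exact lt_irrefl _ hpb
  -- fibers
  have hFm : MeasurableSet (p ⁻¹' {y}) := hpm (measurableSet_singleton _)
  have hF'm : MeasurableSet (p ⁻¹' {y'}) := hpm (measurableSet_singleton _)
  have hμF : μfam y (p ⁻¹' {y}) = 1 := by
    rw [← Measure.map_apply hpm (measurableSet_singleton y), hfiber y]
    exact Measure.dirac_apply_of_mem rfl
  have hνF' : μfam y' (p ⁻¹' {y'}) = 1 := by
    rw [← Measure.map_apply hpm (measurableSet_singleton y'), hfiber y']
    exact Measure.dirac_apply_of_mem rfl
  -- every coupling is a probability measure concentrated on the product of fibers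
  have hone : ∀ ρ : Measure (X × X), ρ.map Prod.fst = μfam y → ρ.map Prod.snd = μfam y' →
      ρ Set.univ = 1 ∧ 1 ≤ ρ ((p ⁻¹' {y}) ×ˢ (p ⁻¹' {y'})) := by
    intro ρ hρ1 hρ2
    have huniv : ρ Set.univ = 1 := by
      rw [← Set.preimage_univ (f := Prod.fst),
        ← Measure.map_apply measurable_fst MeasurableSet.univ, hρ1, measure_univ]
    refine ⟨huniv, ?_⟩
    have hcF : ρ ((p ⁻¹' {y})ᶜ ×ˢ univ) = 0 := by
      rw [Set.prod_univ, ← Measure.map_apply measurable_fst hFm.compl, hρ1,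
        measure_compl hFm (measure_ne_top _ _), hμF, measure_univ, tsub_self]
    have hcF' : ρ (univ ×ˢ (p ⁻¹' {y'})ᶜ) = 0 := by
      rw [Set.univ_prod, ← Measure.map_apply measurable_snd hF'm.compl, hρ2,
        measure_compl hF'm (measure_ne_top _ _), hνF', measure_univ, tsub_self]
    have hcompl : ((p ⁻¹' {y}) ×ˢ (p ⁻¹' {y'}))ᶜ
        ⊆ ((p ⁻¹' {y})ᶜ ×ˢ univ) ∪ (univ ×ˢ (p ⁻¹' {y'})ᶜ) := by
      intro z hz
      rw [Set.mem_compl_iff, Set.mem_prod, not_and_or] at hz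
      rcases hz with hz | hz
      · exact Or.inl (Set.mem_prod.mpr ⟨hz, trivial⟩)
      · exact Or.inr (Set.mem_prod.mpr ⟨trivial, hz⟩)
    have h0 : ρ (((p ⁻¹' {y}) ×ˢ (p ⁻¹' {y'}))ᶜ) = 0 :=
      le_antisymm ((measure_mono hcompl).trans ((measure_union_le _ _).trans
        (by rw [hcF, hcF', add_zero]))) zero_le
    calc (1:ℝ≥0∞) = ρ Set.univ := huniv.symm
      _ ≤ ρ ((p ⁻¹' {y}) ×ˢ (p ⁻¹' {y'})) + ρ (((p ⁻¹' {y}) ×ˢ (p ⁻¹' {y'}))ᶜ) := by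
          rw [← Set.union_compl_self ((p ⁻¹' {y}) ×ˢ (p ⁻¹' {y'}))]
          exact measure_union_le _ _
      _ = ρ ((p ⁻¹' {y}) ×ˢ (p ⁻¹' {y'})) := by rw [h0, add_zero]
  have hedist_ge : ∀ z : X × X, z ∈ (p ⁻¹' {y}) ×ˢ (p ⁻¹' {y'}) → D ≤ edist z.1 z.2 := by
    intro z hz
    have h1 : p z.1 = y := hz.1
    have h2 : p z.2 = y' := hz.2
    calc D = edist (p z.1) (p z.2) := by rw [h1, h2]
      _ ≤ edist z.1 z.2 := hlip _ _
  -- lower bound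
  have hlow : D ≤ W q (μfam y) (μfam y') := by
    show D ≤ ⨅ π ∈ {π : Measure (X × X) | IsCoupling π (μfam y) (μfam y')},
      (∫⁻ z, edist z.1 z.2 ^ q ∂π) ^ (1 / q)
    refine le_iInf fun ρ => le_iInf fun hρ => ?_
    obtain ⟨hρ1, hρ2⟩ := hρ
    obtain ⟨huniv, hFF⟩ := hone ρ hρ1 hρ2
    have hint : D ^ q ≤ ∫⁻ z, edist z.1 z.2 ^ q ∂ρ := by
      have hpt : ∀ z : X × X,
          ((p ⁻¹' {y}) ×ˢ (p ⁻¹' {y'})).indicator (fun _ => D ^ q) z ≤ edist z.1 z.2 ^ q := by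
        intro z
        by_cases hz : z ∈ (p ⁻¹' {y}) ×ˢ (p ⁻¹' {y'})
        · rw [Set.indicator_of_mem hz]
          exact ENNReal.rpow_le_rpow (hedist_ge z hz) hq0.le
        · rw [Set.indicator_of_notMem hz]
          exact zero_le
      calc D ^ q = D ^ q * 1 := (mul_one _).symm
        _ ≤ D ^ q * ρ ((p ⁻¹' {y}) ×ˢ (p ⁻¹' {y'})) := mul_le_mul_right hFF _
        _ = ∫⁻ z, ((p ⁻¹' {y}) ×ˢ (p ⁻¹' {y'})).indicator (fun _ => D ^ q) z ∂ρ :=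
            (lintegral_indicator_const (hFm.prod hF'm) _).symm
        _ ≤ _ := lintegral_mono hpt
    calc D = (D ^ q) ^ (1/q) := by
          rw [← ENNReal.rpow_mul, mul_one_div_cancel hqne, ENNReal.rpow_one]
      _ ≤ _ := ENNReal.rpow_le_rpow hint (by positivity)
  -- a sequence of near-optimal W₂ couplings
  have hseq : ∀ n : ℕ, ∃ ρ : Measure (X × X), IsCoupling ρ (μfam y) (μfam y') ∧
      (∫⁻ z, edist z.1 z.2 ^ (2:ℝ) ∂ρ) ^ (1/(2:ℝ)) < D + ((n+1 : ℕ) : ℝ≥0∞)⁻¹ := by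
    intro n
    have hlt : (⨅ π ∈ {π : Measure (X × X) | IsCoupling π (μfam y) (μfam y')},
        (∫⁻ z, edist z.1 z.2 ^ (2:ℝ) ∂π) ^ (1/(2:ℝ))) < D + ((n+1 : ℕ) : ℝ≥0∞)⁻¹ := by
      have hW : (⨅ π ∈ {π : Measure (X × X) | IsCoupling π (μfam y) (μfam y')},
          (∫⁻ z, edist z.1 z.2 ^ (2:ℝ) ∂π) ^ (1/(2:ℝ))) = D := hW2 y y'
      rw [hW]
      exact ENNReal.lt_add_right hD
        (ENNReal.inv_ne_zero.mpr (ENNReal.natCast_ne_top _))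
    obtain ⟨ρ, hρlt⟩ := iInf_lt_iff.mp hlt
    obtain ⟨hρmem, hρcost⟩ := iInf_lt_iff.mp hρlt
    exact ⟨ρ, hρmem, hρcost⟩
  choose ρseq hρc hρcost using hseq
  set 𝒰 : Ultrafilter ℕ := Ultrafilter.of Filter.atTop with h𝒰
  have h𝒰le : (𝒰 : Filter ℕ) ≤ Filter.atTop := Ultrafilter.of_le _
  obtain ⟨P, hP1, hP2, hPtend⟩ := aux_limit_coupling (μfam y) (μfam y') ρseq
    (fun n => (hρc n).1) (fun n => (hρc n).2) 𝒰
  have hcost2 : ∀ n, ∫⁻ z, edist z.1 z.2 ^ (2:ℝ) ∂(ρseq n)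
      ≤ (D + ((n+1 : ℕ) : ℝ≥0∞)⁻¹) ^ (2:ℝ) := by
    intro n
    calc ∫⁻ z, edist z.1 z.2 ^ (2:ℝ) ∂(ρseq n)
        = ((∫⁻ z, edist z.1 z.2 ^ (2:ℝ) ∂(ρseq n)) ^ (1/(2:ℝ))) ^ (2:ℝ) := by
          rw [← ENNReal.rpow_mul]
          norm_num
      _ ≤ (D + ((n+1 : ℕ) : ℝ≥0∞)⁻¹) ^ (2:ℝ) :=
          ENNReal.rpow_le_rpow (hρcost n).le (by norm_num)
  -- the limit coupling is supported on pairs at distance ≤ D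
  have hbad : ∀ mm : ℕ, P {z : X × X | D + ((mm+1 : ℕ) : ℝ≥0∞)⁻¹ < edist z.1 z.2} = 0 := by
    intro mm
    set δ : ℝ≥0∞ := ((mm+1 : ℕ) : ℝ≥0∞)⁻¹ with hδdef
    have hδ0 : δ ≠ 0 := ENNReal.inv_ne_zero.mpr (ENNReal.natCast_ne_top _)
    set Bad : Set (X × X) := {z : X × X | D + δ < edist z.1 z.2} with hBadDef
    have hBadOpen : IsOpen Bad :=
      isOpen_lt continuous_const (continuous_edist (α := X))
    have hBadm : MeasurableSet Bad := hBadOpen.measurableSet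
    set Good : Set (X × X) := ((p ⁻¹' {y}) ×ˢ (p ⁻¹' {y'})) \ Bad with hGoodDef
    have hGoodm : MeasurableSet Good := (hFm.prod hF'm).diff hBadm
    obtain ⟨β, hβ⟩ := aux_ulim 𝒰 fun n => ρseq n Bad
    obtain ⟨γ, hγ⟩ := aux_ulim 𝒰 fun n => ρseq n Good
    have hper : ∀ n, (D+δ)^(2:ℝ) * ρseq n Bad + D^(2:ℝ) * ρseq n Good
        ≤ (D + ((n+1 : ℕ) : ℝ≥0∞)⁻¹)^(2:ℝ) := by
      intro n
      refine le_trans ?_ (hcost2 n)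
      rw [← lintegral_indicator_const hBadm, ← lintegral_indicator_const hGoodm,
        ← lintegral_add_left (measurable_const.indicator hBadm)]
      refine lintegral_mono fun z => ?_
      by_cases hzB : z ∈ Bad
      · have hzG : z ∉ Good := fun hzG => hzG.2 hzB
        rw [Set.indicator_of_mem hzB, Set.indicator_of_notMem hzG, add_zero]
        exact ENNReal.rpow_le_rpow (le_of_lt hzB) (by norm_num)
      · rw [Set.indicator_of_notMem hzB]
        by_cases hzG : z ∈ Good
        · rw [Set.indicator_of_mem hzG, zero_add]
          exact ENNReal.rpow_le_rpow (hedist_ge z hzG.1) (by norm_num)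
        · rw [Set.indicator_of_notMem hzG, zero_add]
          exact zero_le
    have hone' : ∀ n, (1:ℝ≥0∞) ≤ ρseq n Bad + ρseq n Good := by
      intro n
      obtain ⟨-, hFF⟩ := hone (ρseq n) (hρc n).1 (hρc n).2
      refine hFF.trans ?_
      refine (measure_mono ?_).trans (measure_union_le Bad Good)
      intro z hz
      by_cases hzB : z ∈ Bad
      · exact Or.inl hzB
      · exact Or.inr ⟨hz, hzB⟩
    have hβ1 : β ≤ 1 := le_of_tendsto_of_tendsto' hβ tendsto_const_nhds fun n =>
      (measure_mono (Set.subset_univ _)).trans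
        (hone (ρseq n) (hρc n).1 (hρc n).2).1.le
    have hγ1 : γ ≤ 1 := le_of_tendsto_of_tendsto' hγ tendsto_const_nhds fun n =>
      (measure_mono (Set.subset_univ _)).trans
        (hone (ρseq n) (hρc n).1 (hρc n).2).1.le
    have hRHStend : Tendsto (fun n : ℕ => (D + ((n+1 : ℕ) : ℝ≥0∞)⁻¹)^(2:ℝ))
        (𝒰 : Filter ℕ) (nhds (D ^ (2:ℝ))) := by
      have h0 : Tendsto (fun n : ℕ => ((n+1 : ℕ) : ℝ≥0∞)⁻¹) Filter.atTop (nhds 0) :=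
        ENNReal.tendsto_inv_nat_nhds_zero.comp (tendsto_add_atTop_nat 1)
      have h1 : Tendsto (fun n : ℕ => D + ((n+1 : ℕ) : ℝ≥0∞)⁻¹) Filter.atTop (nhds D) := by
        have := (tendsto_const_nhds (x := D) (f := (Filter.atTop : Filter ℕ))).add h0
        simpa using this
      have h2 : Tendsto (fun n : ℕ => (D + ((n+1 : ℕ) : ℝ≥0∞)⁻¹)^(2:ℝ))
          Filter.atTop (nhds (D ^ (2:ℝ))) :=
        ((ENNReal.continuous_rpow_const).tendsto D).comp h1
      exact h2.mono_left h𝒰le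
    have hLHStend : Tendsto (fun n => (D+δ)^(2:ℝ) * ρseq n Bad + D^(2:ℝ) * ρseq n Good)
        (𝒰 : Filter ℕ) (nhds ((D+δ)^(2:ℝ) * β + D^(2:ℝ) * γ)) := by
      have hfin1 : (D+δ)^(2:ℝ) ≠ ⊤ :=
        ENNReal.rpow_ne_top_of_nonneg (by norm_num)
          (ENNReal.add_ne_top.mpr ⟨hD, by simp [hδdef]⟩)
      have hfin2 : D^(2:ℝ) ≠ ⊤ := ENNReal.rpow_ne_top_of_nonneg (by norm_num) hD
      exact (ENNReal.Tendsto.const_mul hβ (Or.inr hfin1)).add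
        (ENNReal.Tendsto.const_mul hγ (Or.inr hfin2))
    have hineq1 : (D+δ)^(2:ℝ) * β + D^(2:ℝ) * γ ≤ D ^ (2:ℝ) :=
      le_of_tendsto_of_tendsto' hLHStend hRHStend hper
    have hineq2 : (1:ℝ≥0∞) ≤ β + γ :=
      le_of_tendsto_of_tendsto' tendsto_const_nhds (hβ.add hγ) hone'
    have hβ0 : β = 0 := by
      by_contra hβne
      have hD2ne : D ^ (2:ℝ) ≠ ⊤ := ENNReal.rpow_ne_top_of_nonneg (by norm_num) hD
      have hkey1 : D ^ (2:ℝ) ≤ D^(2:ℝ) * β + D^(2:ℝ) * γ := by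
        calc D^(2:ℝ) = D^(2:ℝ) * 1 := (mul_one _).symm
          _ ≤ D^(2:ℝ) * (β + γ) := mul_le_mul_right hineq2 _
          _ = _ := mul_add _ _ _
      have hγfin : D^(2:ℝ) * γ ≠ ⊤ :=
        ENNReal.mul_ne_top hD2ne (hγ1.trans_lt ENNReal.one_lt_top).ne
      have hkey3 : (D+δ)^(2:ℝ) * β ≤ D^(2:ℝ) * β :=
        (ENNReal.add_le_add_iff_right hγfin).mp (hineq1.trans hkey1)
      have hβfin : β ≠ ⊤ := (hβ1.trans_lt ENNReal.one_lt_top).ne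
      have hkey4 : (D+δ)^(2:ℝ) ≤ D^(2:ℝ) :=
        (ENNReal.mul_le_mul_iff_left hβne hβfin).mp hkey3
      have hlt2 : D^(2:ℝ) < (D+δ)^(2:ℝ) :=
        ENNReal.rpow_lt_rpow (ENNReal.lt_add_right hD hδ0) (by norm_num)
      exact absurd hkey4 (not_le.mpr hlt2)
    -- conclude `P Bad = 0` via a countable basis of rectangles
    obtain ⟨Bs, hBsc, -, hBsbasis⟩ := TopologicalSpace.exists_countable_basis X
    have hbasis2 := hBsbasis.prod hBsbasis
    have hcover : Bad = ⋃₀ {s | s ∈ Set.image2 (fun x1 x2 => x1 ×ˢ x2) Bs Bs ∧ s ⊆ Bad} :=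
      hbasis2.open_eq_sUnion' hBadOpen
    have hSSc : {s | s ∈ Set.image2 (fun x1 x2 => x1 ×ˢ x2) Bs Bs ∧ s ⊆ Bad}.Countable :=
      (hBsc.image2 hBsc _).mono (fun s hs => hs.1)
    have hPz : ∀ s ∈ {s | s ∈ Set.image2 (fun x1 x2 => x1 ×ˢ x2) Bs Bs ∧ s ⊆ Bad},
        P s = 0 := by
      rintro s ⟨⟨Us, hUs, Vs, hVs, rfl⟩, hsubBad⟩
      have hUo : IsOpen Us := hBsbasis.isOpen hUs
      have hVo : IsOpen Vs := hBsbasis.isOpen hVs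
      have htd := hPtend Us Vs hUo.measurableSet hVo.measurableSet
      refine le_antisymm ?_ zero_le
      have hle' : P (Us ×ˢ Vs) ≤ β :=
        le_of_tendsto_of_tendsto' htd hβ (fun n => measure_mono hsubBad)
      rwa [hβ0] at hle'
    rw [hcover]
    haveI := hSSc.to_subtype
    refine le_antisymm ?_ zero_le
    rw [Set.sUnion_eq_iUnion]
    refine (measure_iUnion_le _).trans ?_
    refine le_of_eq (ENNReal.tsum_eq_zero.mpr ?_)
    rintro ⟨s, hs⟩
    exact hPz s hs
  have hPbadall : P {z : X × X | D < edist z.1 z.2} = 0 := by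
    have hcov : {z : X × X | D < edist z.1 z.2}
        ⊆ ⋃ mm : ℕ, {z : X × X | D + ((mm+1 : ℕ) : ℝ≥0∞)⁻¹ < edist z.1 z.2} := by
      intro z hz
      obtain ⟨r, hr0, hrlt⟩ := ENNReal.lt_iff_exists_add_pos_lt.mp hz
      obtain ⟨n, hn⟩ := ENNReal.exists_inv_nat_lt
        (by exact_mod_cast hr0.ne' : ((r:ℝ≥0∞)) ≠ 0)
      refine Set.mem_iUnion.mpr ⟨n, ?_⟩
      have hmono : (((n+1 : ℕ)) : ℝ≥0∞)⁻¹ ≤ ((n : ℕ) : ℝ≥0∞)⁻¹ := by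
        gcongr
        exact_mod_cast Nat.le_succ n
      show D + ((n+1 : ℕ) : ℝ≥0∞)⁻¹ < edist z.1 z.2
      calc D + ((n+1 : ℕ) : ℝ≥0∞)⁻¹ ≤ D + (r : ℝ≥0∞) :=
            add_le_add_right (hmono.trans hn.le) D
        _ < edist z.1 z.2 := hrlt
    refine le_antisymm ((measure_mono hcov).trans ((measure_iUnion_le _).trans ?_)) zero_le
    rw [ENNReal.tsum_eq_zero.mpr hbad]
  -- upper bound
  have hup : W q (μfam y) (μfam y') ≤ D := by
    show (⨅ π ∈ {π : Measure (X × X) | IsCoupling π (μfam y) (μfam y')},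
      (∫⁻ z, edist z.1 z.2 ^ q ∂π) ^ (1 / q)) ≤ D
    have hmem : P ∈ {π : Measure (X × X) | IsCoupling π (μfam y) (μfam y')} := ⟨hP1, hP2⟩
    refine le_trans (iInf₂_le P hmem) ?_
    have hPuniv : P Set.univ = 1 := (hone P hP1 hP2).1
    have hae : ∀ᵐ z ∂P, edist z.1 z.2 ≤ D := by
      rw [ae_iff]
      have : {z : X × X | ¬ edist z.1 z.2 ≤ D} = {z : X × X | D < edist z.1 z.2} := by
        ext z
        simp [not_le]
      rw [this]
      exact hPbadall
    have hint : ∫⁻ z, edist z.1 z.2 ^ q ∂P ≤ D ^ q := by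
      calc ∫⁻ z, edist z.1 z.2 ^ q ∂P ≤ ∫⁻ _, D ^ q ∂P :=
            lintegral_mono_ae (hae.mono fun z hz => ENNReal.rpow_le_rpow hz hq0.le)
        _ = D ^ q := by rw [lintegral_const, hPuniv, mul_one]
    calc (∫⁻ z, edist z.1 z.2 ^ q ∂P) ^ (1/q) ≤ (D ^ q) ^ (1/q) :=
          ENNReal.rpow_le_rpow hint (by positivity)
      _ = D := by rw [← ENNReal.rpow_mul, mul_one_div_cancel hqne, ENNReal.rpow_one]
  exact le_antisymm hup hlow
end
end

section
/- Let Y, Z be metric measure spaces with intrinsic (length) metrics, w_d, w_m : Y → [0, ∞) bounded continuous with w_m not identically 0, and assume m_Z is finite. Then the projection p : Y ×_w Z → Y from the warped product to Y satisfies p_*m_w = C·w_m·m_Y (where C = m_Z(Z)), the disintegration over {w_m > 0} is given by μ_y = (q_y)_*(C⁻¹ m_Z), and W₂(μ_y, μ_{y'}) = d_Y(y, y') for all y, y' with w_m(y), w_m(y') > 0; consequently p induces a metric measure foliation. -/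
open MeasureTheory Filter Set
open scoped ENNReal NNReal

noncomputable section

namespace MMF

/-- The `L^q`-Wasserstein distance for a general cost, with values in `[0, ∞]`. -/
noncomputable def WCost {X : Type*} [MeasurableSpace X]
    (q : ℝ) (cost : X → X → ℝ≥0∞) (μ ν : Measure X) : ℝ≥0∞ :=
  ⨅ π ∈ {π : Measure (X × X) | IsCoupling π μ ν},
    (∫⁻ pr, cost pr.1 pr.2 ^ q ∂π) ^ (1 / q)

/-- The (extended) metric speed `|c'|(t)` of a curve. -/
noncomputable def eSpeed {X : Type*} [PseudoEMetricSpace X] (c : ℝ → X) (t : ℝ) : ℝ≥0∞ :=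
  Filter.limsup (fun h : ℝ => edist (c (t + h)) (c t) / ENNReal.ofReal |h|)
    (nhdsWithin 0 {0}ᶜ)

/-- `c` is an absolutely continuous curve on `[0,1]`. -/
def IsAC {X : Type*} [PseudoEMetricSpace X] (c : ℝ → X) : Prop :=
  ∃ f : ℝ → ℝ≥0∞, Measurable f ∧ (∫⁻ t in Set.Icc (0:ℝ) 1, f t) < ⊤ ∧
    ∀ ⦃s t : ℝ⦄, 0 ≤ s → s ≤ t → t ≤ 1 → edist (c s) (c t) ≤ ∫⁻ r in Set.Icc s t, f r

/-- The length `∫₀¹ |c'|(t) dt` of a curve. -/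
noncomputable def curveLength {X : Type*} [PseudoEMetricSpace X] (c : ℝ → X) : ℝ≥0∞ :=
  ∫⁻ t in Set.Icc (0:ℝ) 1, eSpeed c t

/-- The metric is intrinsic (a length metric): distances are infima of lengths of
absolutely continuous curves. -/
def IsIntrinsic (X : Type*) [PseudoEMetricSpace X] : Prop :=
  ∀ a b : X, edist a b
    = ⨅ c ∈ {c : ℝ → X | c 0 = a ∧ c 1 = b ∧ IsAC c}, curveLength c

/-- The `w_d`-length `∫₀¹ √(|α̇|² + w_d(α)²|β̇|²) dt` of a curve `c = (α, β)` in `Y × Z`. -/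
noncomputable def wLength {Y Z : Type*} [PseudoEMetricSpace Y] [PseudoEMetricSpace Z]
    (wd : Y → ℝ) (c : ℝ → Y × Z) : ℝ≥0∞ :=
  ∫⁻ t in Set.Icc (0:ℝ) 1,
    (eSpeed (fun s => (c s).1) t ^ (2:ℝ)
      + ENNReal.ofReal (wd (c t).1) ^ (2:ℝ) * eSpeed (fun s => (c s).2) t ^ (2:ℝ))
    ^ (1/2 : ℝ)

/-- The warped pseudo-distance `d_w` on `Y × Z`. -/
noncomputable def wDist {Y Z : Type*} [PseudoEMetricSpace Y] [PseudoEMetricSpace Z]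
    (wd : Y → ℝ) (a b : Y × Z) : ℝ≥0∞ :=
  ⨅ c ∈ {c : ℝ → Y × Z | c 0 = a ∧ c 1 = b
      ∧ IsAC (fun s => (c s).1) ∧ IsAC (fun s => (c s).2)}, wLength wd c

end MMF

open MMF

section Aux

lemma MMFaux.sq_sqrt (x : ℝ≥0∞) : (x ^ (2:ℝ)) ^ (1/2 : ℝ) = x := by
  rw [← ENNReal.rpow_mul]
  norm_num

variable {Y Z : Type*} [PseudoEMetricSpace Y] [PseudoEMetricSpace Z]

/-- The horizontal projection decreases the warped distance: lower bound. -/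
lemma MMFaux.lemA (hIY : IsIntrinsic Y) (wd : Y → ℝ) (y y' : Y) (z z' : Z) :
    edist y y' ≤ wDist wd (y, z) (y', z') := by
  rw [wDist]
  refine le_iInf₂ fun c hc => ?_
  obtain ⟨hc0, hc1, hACa, -⟩ := hc
  have h1 : edist y y' ≤ curveLength (fun s => (c s).1) := by
    rw [hIY y y']
    exact iInf₂_le _ ⟨by simp [hc0], by simp [hc1], hACa⟩
  refine h1.trans ?_
  rw [curveLength, wLength]
  refine lintegral_mono fun t => ?_
  calc eSpeed (fun s => (c s).1) t
      = (eSpeed (fun s => (c s).1) t ^ (2:ℝ)) ^ (1/2:ℝ) := (MMFaux.sq_sqrt _).symm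
    _ ≤ _ := ENNReal.rpow_le_rpow le_self_add (by norm_num)

lemma MMFaux.isAC_const (z : Z) : IsAC (fun _ : ℝ => z) :=
  ⟨fun _ => 0, measurable_const, by simp, fun s t _ _ _ => by simp⟩

lemma MMFaux.eSpeed_const (z : Z) (t : ℝ) : eSpeed (fun _ : ℝ => z) t = 0 := by
  rw [eSpeed]
  have h : (fun h : ℝ => edist z z / ENNReal.ofReal |h|) = fun _ => (0:ℝ≥0∞) := by
    funext h; simp
  rw [h, limsup_const]

/-- Horizontal transport: upper bound. -/
lemma MMFaux.lemB (hIY : IsIntrinsic Y) (wd : Y → ℝ) (y y' : Y) (z : Z) :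
    wDist wd (y, z) (y', z) ≤ edist y y' := by
  rw [hIY y y']
  refine le_iInf₂ fun α hα => ?_
  obtain ⟨ha0, ha1, hAC⟩ := hα
  have hmem : (fun t => ((α t, z) : Y × Z)) ∈ {c : ℝ → Y × Z | c 0 = (y, z) ∧ c 1 = (y', z)
      ∧ IsAC (fun s => (c s).1) ∧ IsAC (fun s => (c s).2)} := by
    exact ⟨by simp [ha0], by simp [ha1], hAC, MMFaux.isAC_const z⟩
  rw [wDist]
  refine (iInf₂_le _ hmem).trans ?_
  rw [wLength, curveLength]
  refine le_of_eq (lintegral_congr fun t => ?_)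
  show (eSpeed α t ^ (2:ℝ)
      + ENNReal.ofReal (wd (α t)) ^ (2:ℝ) * eSpeed (fun _ : ℝ => z) t ^ (2:ℝ)) ^ (1/2:ℝ)
    = eSpeed α t
  rw [MMFaux.eSpeed_const, ENNReal.zero_rpow_of_pos (by norm_num), mul_zero, add_zero,
    MMFaux.sq_sqrt]

end Aux

/-- for intrinsic metric measure spaces `Y, Z` with `m_Z` finite and
bounded continuous warping functions `w_d, w_m ≥ 0` with `w_m ≢ 0`, the projection
`p : Y ×_w Z → Y` of the warped product satisfies `p_*m_w = C·w_m·m_Y` with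
`C = m_Z(Z)`, the disintegration over `{w_m > 0}` is `μ_y = δ_y ⊗ C⁻¹m_Z`, and with
respect to the warped distance `d_w` one has `W₂(μ_y, μ_{y'}) = d_Y(y, y')` whenever
`w_m(y), w_m(y') > 0`; hence `p` induces a metric measure foliation. -/
theorem warped_product_foliation
    {Y Z : Type*} [MetricSpace Y] [MetricSpace Z]
    [CompleteSpace Y] [CompleteSpace Z]
    [TopologicalSpace.SeparableSpace Y] [TopologicalSpace.SeparableSpace Z]
    [MeasurableSpace Y] [BorelSpace Y] [MeasurableSpace Z] [BorelSpace Z]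
    (mY : Measure Y) (mZ : Measure Z)
    [IsLocallyFiniteMeasure mY] [IsFiniteMeasure mZ] (hmZ : mZ ≠ 0)
    (hsuppY : ∀ (y : Y) (r : ℝ), 0 < r → 0 < mY (Metric.ball y r))
    (hsuppZ : ∀ (z : Z) (r : ℝ), 0 < r → 0 < mZ (Metric.ball z r))
    (hIY : IsIntrinsic Y) (hIZ : IsIntrinsic Z)
    (wd wm : Y → ℝ) (hwdc : Continuous wd) (hwmc : Continuous wm)
    (hwd0 : ∀ y, 0 ≤ wd y) (hwm0 : ∀ y, 0 ≤ wm y)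
    (hwdb : ∃ M : ℝ, ∀ y, wd y ≤ M) (hwmb : ∃ M : ℝ, ∀ y, wm y ≤ M)
    (hwm_ne : ∃ y, wm y ≠ 0) :
    -- the measure of the warped product (before passing to the metric quotient)
    -- is `m_w = (w_m m_Y) ⊗ m_Z`, and `C = m_Z(Z)`:
    -- (1) the projection pushes `m_w` forward to `C · w_m · m_Y`;
    ((mY.withDensity fun y => ENNReal.ofReal (wm y)).prod mZ).map Prod.fst
        = (mZ Set.univ) • (mY.withDensity fun y => ENNReal.ofReal (wm y)) ∧
    -- (2) the fiber measures `μ_y = δ_y ⊗ C⁻¹ m_Z` disintegrate `m_w` over the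
    --     projection;
    ((mY.withDensity fun y => ENNReal.ofReal (wm y)).prod mZ)
        = ((((mY.withDensity fun y => ENNReal.ofReal (wm y)).prod mZ).map Prod.fst).bind
            fun y => (Measure.dirac y).prod ((mZ Set.univ)⁻¹ • mZ)) ∧
    -- (3) with respect to the warped distance `d_w`, the fiber measures realize the
    --     base distance: `W₂(μ_y, μ_{y'}) = d_Y(y, y')` on `{w_m > 0}`.
    (∀ y y' : Y, 0 < wm y → 0 < wm y' →
      WCost 2 (wDist wd)
        ((Measure.dirac y).prod ((mZ Set.univ)⁻¹ • mZ))
        ((Measure.dirac y').prod ((mZ Set.univ)⁻¹ • mZ))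
      = edist y y') := by
  classical
  have hC0 : (mZ Set.univ) ≠ 0 := fun h => hmZ (Measure.measure_univ_eq_zero.mp h)
  have hCt : (mZ Set.univ) ≠ ⊤ := measure_ne_top mZ _
  set ν : Measure Z := (mZ Set.univ)⁻¹ • mZ with hν
  haveI hνprob : IsProbabilityMeasure ν :=
    ⟨by rw [hν, Measure.smul_apply, smul_eq_mul, ENNReal.inv_mul_cancel hC0 hCt]⟩
  set μ' : Measure Y := mY.withDensity fun y => ENNReal.ofReal (wm y) with hμ'
  refine ⟨Measure.map_fst_prod, ?_, ?_⟩
  · -- part (2)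
    rw [Measure.map_fst_prod]
    have hfmeas : Measurable fun y : Y => (Measure.dirac y).prod ν := by
      have h : (fun y : Y => (Measure.dirac y).prod ν)
          = fun y => ν.map (Prod.mk y) := by
        funext y; exact Measure.dirac_prod _
      rw [h]; exact Measurable.map_prodMk_left
    refine Measure.prod_eq fun s t hs ht => ?_
    rw [Measure.bind_apply (hs.prod ht) hfmeas.aemeasurable, lintegral_smul_measure]
    have h1 : ∀ y : Y, ((Measure.dirac y).prod ν) (s ×ˢ t)
        = s.indicator (fun _ => ν t) y := by
      intro y
      rw [Measure.prod_prod, Measure.dirac_apply' _ hs]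
      by_cases h : y ∈ s <;> simp [h]
    simp_rw [h1]
    rw [lintegral_indicator hs, setLIntegral_const]
    have hνt : ν t = (mZ Set.univ)⁻¹ * mZ t := rfl
    rw [hνt]
    calc mZ Set.univ * ((mZ Set.univ)⁻¹ * mZ t * μ' s)
        = (mZ Set.univ * (mZ Set.univ)⁻¹) * (mZ t * μ' s) := by ring
      _ = μ' s * mZ t := by
          rw [ENNReal.mul_inv_cancel hC0 hCt, one_mul, mul_comm]
  · -- part (3)
    intro y y' _ _
    refine le_antisymm ?_ ?_
    · -- upper bound via the horizontal coupling
      set g : Z → (Y × Z) × (Y × Z) := fun z => ((y, z), (y', z)) with hg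
      have hgm : Measurable g :=
        (measurable_const.prodMk measurable_id).prodMk
          (measurable_const.prodMk measurable_id)
      have hcpl : IsCoupling (ν.map g) ((Measure.dirac y).prod ν)
          ((Measure.dirac y').prod ν) := by
        constructor
        · rw [Measure.map_map measurable_fst hgm]
          have h : (Prod.fst ∘ g) = Prod.mk y := rfl
          rw [h, Measure.dirac_prod]
        · rw [Measure.map_map measurable_snd hgm]
          have h : (Prod.snd ∘ g) = Prod.mk y' := rfl
          rw [h, Measure.dirac_prod]
      rw [WCost]
      refine iInf₂_le_of_le (ν.map g) hcpl ?_
      have hint : (∫⁻ pr, wDist wd pr.1 pr.2 ^ (2:ℝ) ∂(ν.map g))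
          ≤ edist y y' ^ (2:ℝ) := by
        refine (lintegral_map_le _ g).trans ?_
        calc ∫⁻ z, wDist wd (g z).1 (g z).2 ^ (2:ℝ) ∂ν
            ≤ ∫⁻ _, edist y y' ^ (2:ℝ) ∂ν :=
              lintegral_mono fun z =>
                ENNReal.rpow_le_rpow (MMFaux.lemB hIY wd y y' z) (by norm_num)
          _ = edist y y' ^ (2:ℝ) := by simp
      calc (∫⁻ pr, wDist wd pr.1 pr.2 ^ (2:ℝ) ∂(ν.map g)) ^ (1/(2:ℝ))
          ≤ (edist y y' ^ (2:ℝ)) ^ (1/(2:ℝ)) :=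
            ENNReal.rpow_le_rpow hint (by norm_num)
        _ = edist y y' := MMFaux.sq_sqrt _
    · -- lower bound: any coupling costs at least `edist y y'`
      rw [WCost]
      refine le_iInf₂ fun π hπ => ?_
      obtain ⟨hπ1, hπ2⟩ := hπ
      have hA : MeasurableSet ({y} ×ˢ (univ : Set Z)) :=
        (measurableSet_singleton y).prod MeasurableSet.univ
      have hB : MeasurableSet ({y'} ×ˢ (univ : Set Z)) :=
        (measurableSet_singleton y').prod MeasurableSet.univ
      set T : Set ((Y × Z) × (Y × Z)) :=
        (Prod.fst ⁻¹' ({y} ×ˢ (univ : Set Z))) ∩ (Prod.snd ⁻¹' ({y'} ×ˢ (univ : Set Z)))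
        with hT
      have hTm : MeasurableSet T := (measurable_fst hA).inter (measurable_snd hB)
      have hπA : π (Prod.fst ⁻¹' (({y} ×ˢ (univ : Set Z))ᶜ)) = 0 := by
        rw [← Measure.map_apply measurable_fst hA.compl, hπ1]
        have h : (({y} ×ˢ (univ : Set Z))ᶜ) = ({y}ᶜ ×ˢ (univ : Set Z)) := by
          rw [Set.prod_univ, Set.prod_univ]; rfl
        rw [h, Measure.prod_prod]
        simp [Measure.dirac_apply' _ (measurableSet_singleton y).compl]
      have hπB : π (Prod.snd ⁻¹' (({y'} ×ˢ (univ : Set Z))ᶜ)) = 0 := by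
        rw [← Measure.map_apply measurable_snd hB.compl, hπ2]
        have h : (({y'} ×ˢ (univ : Set Z))ᶜ) = ({y'}ᶜ ×ˢ (univ : Set Z)) := by
          rw [Set.prod_univ, Set.prod_univ]; rfl
        rw [h, Measure.prod_prod]
        simp [Measure.dirac_apply' _ (measurableSet_singleton y').compl]
      have hπuniv : π univ = 1 := by
        have h : π univ = (π.map Prod.fst) univ := by
          rw [Measure.map_apply measurable_fst MeasurableSet.univ, preimage_univ]
        rw [h, hπ1]
        simp
      have hπT : 1 ≤ π T := by
        have hsub : (univ : Set ((Y × Z) × (Y × Z))) ⊆ T ∪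
            ((Prod.fst ⁻¹' (({y} ×ˢ (univ : Set Z))ᶜ))
              ∪ (Prod.snd ⁻¹' (({y'} ×ˢ (univ : Set Z))ᶜ))) := by
          intro p _
          by_cases h1 : p.1 ∈ {y} ×ˢ (univ : Set Z)
          · by_cases h2 : p.2 ∈ {y'} ×ˢ (univ : Set Z)
            · exact Or.inl ⟨h1, h2⟩
            · exact Or.inr (Or.inr h2)
          · exact Or.inr (Or.inl h1)
        calc (1:ℝ≥0∞) = π univ := hπuniv.symm
          _ ≤ π T + (π (Prod.fst ⁻¹' (({y} ×ˢ (univ : Set Z))ᶜ))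
              + π (Prod.snd ⁻¹' (({y'} ×ˢ (univ : Set Z))ᶜ))) :=
            le_trans (measure_mono hsub)
              (le_trans (measure_union_le _ _)
                (add_le_add le_rfl (measure_union_le _ _)))
          _ = π T := by rw [hπA, hπB, add_zero, add_zero]
      have hpt : ∀ pr : (Y × Z) × (Y × Z),
          T.indicator (fun _ => edist y y' ^ (2:ℝ)) pr ≤ wDist wd pr.1 pr.2 ^ (2:ℝ) := by
        intro pr
        by_cases h : pr ∈ T
        · rw [Set.indicator_of_mem h]
          obtain ⟨h1, h2⟩ := h
          have e1 : pr.1 = (y, pr.1.2) := Prod.ext h1.1 rfl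
          have e2 : pr.2 = (y', pr.2.2) := Prod.ext h2.1 rfl
          refine ENNReal.rpow_le_rpow ?_ (by norm_num)
          have hle := MMFaux.lemA hIY wd y y' pr.1.2 pr.2.2
          rw [← e1, ← e2] at hle
          exact hle
        · rw [Set.indicator_of_notMem h]; exact zero_le
      have hint : edist y y' ^ (2:ℝ) ≤ ∫⁻ pr, wDist wd pr.1 pr.2 ^ (2:ℝ) ∂π := by
        calc edist y y' ^ (2:ℝ) = edist y y' ^ (2:ℝ) * 1 := (mul_one _).symm
          _ ≤ edist y y' ^ (2:ℝ) * π T := mul_le_mul_right hπT _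
          _ = ∫⁻ pr, T.indicator (fun _ => edist y y' ^ (2:ℝ)) pr ∂π := by
            rw [lintegral_indicator hTm, setLIntegral_const]
          _ ≤ _ := lintegral_mono hpt
      calc edist y y' = (edist y y' ^ (2:ℝ)) ^ (1/(2:ℝ)) := (MMFaux.sq_sqrt _).symm
        _ ≤ _ := ENNReal.rpow_le_rpow hint (by norm_num)
end
end
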